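/- arXiv:1812.09552 — 6 statements merged into one kernel-verified Lean document; each statement's English description precedes it below -/
import Mathlib

section
/- For all n ≥ 1, Var(LC_n) ≤ (n/2)·(2 − p² − (1 + (1−p)²)/m). -/
open MeasureTheory ProbabilityTheory

/-- A pair of matching subsequences of the words `z` and `y`, of length `r`:
a pair of strictly increasing index maps along which the letters agree. -/
def IsMatchPair {α : Type*} (z y : List α) (r : ℕ)
    (π : Fin r → Fin z.length) (η : Fin r → Fin y.length) : Prop :=
  StrictMono π ∧ StrictMono η ∧ ∀ i, z.get (π i) = y.get (η i)

/-- The length of the longest common subsequence of the words `z` and `y`: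
the largest `r` for which a pair of matching subsequences of length `r` exists. -/
noncomputable def lcsLength {α : Type*} (z y : List α) : ℕ :=
  sSup {r | ∃ π η, IsMatchPair z y r π η}

set_option linter.unusedSectionVars false
open Finset

/-- function version of the match-pair set -/
def FSet {α : Type*} {n n' : ℕ} (x : Fin n → α) (y : Fin n' → α) : Set ℕ :=
  {r | ∃ π : Fin r → Fin n, ∃ η : Fin r → Fin n',
    StrictMono π ∧ StrictMono η ∧ ∀ i, x (π i) = y (η i)}

noncomputable def flcs {α : Type*} {n n' : ℕ} (x : Fin n → α) (y : Fin n' → α) : ℕ :=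
  sSup (FSet x y)

lemma FSet_zero {α : Type*} {n n' : ℕ} (x : Fin n → α) (y : Fin n' → α) : 0 ∈ FSet x y :=
  ⟨fun i => i.elim0, fun i => i.elim0, fun i => i.elim0, fun i => i.elim0, fun i => i.elim0⟩

lemma FSet_bdd {α : Type*} {n n' : ℕ} (x : Fin n → α) (y : Fin n' → α) :
    BddAbove (FSet x y) := by
  refine ⟨n, fun r hr => ?_⟩
  obtain ⟨π, η, hπ, hη, h⟩ := hr
  simpa using Fintype.card_le_of_injective π hπ.injective

lemma flcs_mem {α : Type*} {n n' : ℕ} (x : Fin n → α) (y : Fin n' → α) :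
    flcs x y ∈ FSet x y :=
  Nat.sSup_mem ⟨0, FSet_zero x y⟩ (FSet_bdd x y)

lemma le_flcs {α : Type*} {n n' : ℕ} {x : Fin n → α} {y : Fin n' → α} {r : ℕ}
    (hr : r ∈ FSet x y) : r ≤ flcs x y :=
  le_csSup (FSet_bdd x y) hr

lemma flcs_comm {α : Type*} {n n' : ℕ} (x : Fin n → α) (y : Fin n' → α) :
    flcs x y = flcs y x := by
  unfold flcs
  congr 1
  ext r
  constructor <;> rintro ⟨π, η, hπ, hη, h⟩ <;> exact ⟨η, π, hη, hπ, fun i => (h i).symm⟩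

lemma lcsLength_ofFn {α : Type*} {n n' : ℕ} (x : Fin n → α) (y : Fin n' → α) :
    lcsLength (List.ofFn x) (List.ofFn y) = flcs x y := by
  unfold lcsLength flcs
  congr 1
  ext r
  constructor
  · rintro ⟨π, η, hπ, hη, h⟩
    refine ⟨fun i => Fin.cast (List.length_ofFn (f := x)) (π i),
      fun i => Fin.cast (List.length_ofFn (f := y)) (η i), ?_, ?_, fun i => ?_⟩
    · intro a b hab; exact hπ hab
    · intro a b hab; exact hη hab
    · have := h i
      rwa [List.get_ofFn, List.get_ofFn] at this
  · rintro ⟨π, η, hπ, hη, h⟩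
    refine ⟨fun i => Fin.cast (List.length_ofFn (f := x)).symm (π i),
      fun i => Fin.cast (List.length_ofFn (f := y)).symm (η i), ?_, ?_, fun i => ?_⟩
    · intro a b hab; exact hπ hab
    · intro a b hab; exact hη hab
    · rw [List.get_ofFn, List.get_ofFn]
      simpa using h i

lemma flcs_update_le {α : Type*} [DecidableEq α] {n n' : ℕ} (x : Fin n → α) (y : Fin n' → α)
    (k : Fin n) (a : α) : flcs x y ≤ flcs (Function.update x k a) y + 1 := by
  rcases Nat.eq_zero_or_pos (flcs x y) with h0 | hpos
  · omega
  obtain ⟨s, hs'⟩ : ∃ s, flcs x y = s + 1 := ⟨flcs x y - 1, by omega⟩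
  have hmem : s + 1 ∈ FSet x y := hs' ▸ flcs_mem x y
  obtain ⟨π, η, hπ, hη, h⟩ := hmem
  by_cases hk : ∃ i, π i = k
  · obtain ⟨i₀, hi₀⟩ := hk
    have : s ∈ FSet (Function.update x k a) y := by
      refine ⟨fun j => π (i₀.succAbove j), fun j => η (i₀.succAbove j),
        hπ.comp (Fin.strictMono_succAbove i₀), hη.comp (Fin.strictMono_succAbove i₀),
        fun j => ?_⟩
      rw [Function.update_of_ne, h]
      intro hc
      exact (Fin.succAbove_ne i₀ j) (hπ.injective (hc.trans hi₀.symm))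
    have := le_flcs this
    omega
  · push_neg at hk
    have : s + 1 ∈ FSet (Function.update x k a) y := by
      refine ⟨π, η, hπ, hη, fun i => ?_⟩
      rw [Function.update_of_ne (hk i), h]
    have := le_flcs this
    omega

lemma flcs_update_dist {α : Type*} [DecidableEq α] {n n' : ℕ} (x : Fin n → α) (y : Fin n' → α)
    (k : Fin n) (a : α) :
    ((flcs x y : ℝ) - flcs (Function.update x k a) y) ^ 2 ≤ 1 := by
  have h1 := flcs_update_le x y k a
  have h2 := flcs_update_le (Function.update x k a) y k (x k)
  rw [Function.update_idem, Function.update_eq_self] at h2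
  have c1 : (flcs x y : ℝ) ≤ (flcs (Function.update x k a) y : ℝ) + 1 := by
    exact_mod_cast h1
  have c2 : (flcs (Function.update x k a) y : ℝ) ≤ (flcs x y : ℝ) + 1 := by
    exact_mod_cast h2
  have : |((flcs x y : ℝ) - flcs (Function.update x k a) y)| ≤ 1 := by
    rw [abs_le]; constructor <;> linarith
  calc ((flcs x y : ℝ) - flcs (Function.update x k a) y) ^ 2 = |_| ^2 := (sq_abs _).symm
    _ ≤ 1 ^ 2 := by exact pow_le_pow_left₀ (abs_nonneg _) this 2
    _ = 1 := one_pow 2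
section ES
variable {A : Type*} [Fintype A] [DecidableEq A] {N : ℕ}

/-- product weight -/
def pw (w : Fin N → A → ℝ) (e : Fin N → A) : ℝ := ∏ i, w i (e i)

lemma pw_nonneg {w : Fin N → A → ℝ} (hw0 : ∀ i a, 0 ≤ w i a) (e : Fin N → A) :
    0 ≤ pw w e := Finset.prod_nonneg fun i _ => hw0 i (e i)

lemma sum_pw {w : Fin N → A → ℝ} (hw1 : ∀ i, ∑ a, w i a = 1) :
    ∑ e : Fin N → A, pw w e = 1 := by
  have := Fintype.prod_sum (fun (i : Fin N) (a : A) => w i a)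
  simp only [pw]
  rw [← this]
  simp [hw1]

lemma pw_eq_mul_erase (w : Fin N → A → ℝ) (k : Fin N) (e : Fin N → A) :
    pw w e = w k (e k) * ∏ i ∈ univ.erase k, w i (e i) :=
  (Finset.mul_prod_erase univ (fun i => w i (e i)) (mem_univ k)).symm

lemma pw_update (w : Fin N → A → ℝ) (k : Fin N) (e : Fin N → A) (a : A) :
    pw w (Function.update e k a) = w k a * ∏ i ∈ univ.erase k, w i (e i) := by
  rw [pw_eq_mul_erase w k, Function.update_self]
  congr 1
  exact Finset.prod_congr rfl fun i hi =>
    by rw [Function.update_of_ne (Finset.ne_of_mem_erase hi)]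

lemma marginal {w : Fin N → A → ℝ} (hw1 : ∀ i, ∑ a, w i a = 1) (k : Fin N) (g : A → ℝ) :
    ∑ e : Fin N → A, pw w e * g (e k) = ∑ a, w k a * g a := by
  classical
  rw [← Equiv.sum_comp (Equiv.piSplitAt k (fun _ : Fin N => A)).symm
    (fun e => pw w e * g (e k))]
  rw [Fintype.sum_prod_type]
  have key : ∀ (a : A) (h : {j : Fin N // j ≠ k} → A),
      pw w ((Equiv.piSplitAt k (fun _ : Fin N => A)).symm (a, h)) =
        w k a * ∏ j : {j : Fin N // j ≠ k}, w j (h j) := by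
    intro a h
    set e := (Equiv.piSplitAt k (fun _ : Fin N => A)).symm (a, h) with he
    have hek : e k = a := by simp [he, Equiv.piSplitAt]
    have hej : ∀ j : {j : Fin N // j ≠ k}, e j = h j := by
      intro j
      simp [he, Equiv.piSplitAt, dif_neg j.2]
    rw [pw_eq_mul_erase w k, hek]
    congr 1
    rw [Finset.prod_subtype (univ.erase k) (p := fun j => j ≠ k)
      (fun x => by simp [Finset.mem_erase])]
    exact Finset.prod_congr rfl fun j _ => by rw [hej j]
  have hek' : ∀ (a : A) (h : {j : Fin N // j ≠ k} → A),
      ((Equiv.piSplitAt k (fun _ : Fin N => A)).symm (a, h)) k = a := by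
    intro a h; simp [Equiv.piSplitAt]
  calc ∑ a : A, ∑ h : {j : Fin N // j ≠ k} → A,
        pw w ((Equiv.piSplitAt k (fun _ : Fin N => A)).symm (a, h)) *
          g (((Equiv.piSplitAt k (fun _ : Fin N => A)).symm (a, h)) k)
      = ∑ a : A, ∑ h : {j : Fin N // j ≠ k} → A,
          (w k a * g a) * ∏ j : {j : Fin N // j ≠ k}, w j (h j) := by
        refine Finset.sum_congr rfl fun a _ => Finset.sum_congr rfl fun h _ => ?_
        rw [key a h, hek' a h]; ring
    _ = ∑ a : A, (w k a * g a) * ∑ h : {j : Fin N // j ≠ k} → A,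
          ∏ j : {j : Fin N // j ≠ k}, w j (h j) := by
        simp [Finset.mul_sum]
    _ = ∑ a, w k a * g a := by
        have : ∑ h : {j : Fin N // j ≠ k} → A, ∏ j : {j : Fin N // j ≠ k}, w j (h j) = 1 := by
          rw [← Fintype.prod_sum (fun (j : {j : Fin N // j ≠ k}) (a : A) => w j a)]
          exact Finset.prod_eq_one fun j _ => hw1 j
        simp [this]
end ES

section ES2
variable {A : Type*} [Fintype A] [DecidableEq A] {N : ℕ}

/-- hybrid: first `c` coordinates from `e'`, rest from `e` -/
def hyb (c : ℕ) (e e' : Fin N → A) : Fin N → A := fun i => if (i : ℕ) < c then e' i else e i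

lemma hyb_zero (e e' : Fin N → A) : hyb 0 e e' = e := by
  funext i; simp [hyb]

lemma hyb_top (e e' : Fin N → A) : hyb N e e' = e' := by
  funext i; simp [hyb, i.isLt]

lemma hyb_succ (k : Fin N) (e e' : Fin N → A) :
    hyb (k + 1) e e' = Function.update (hyb k e e') k (e' k) := by
  funext i
  by_cases h : i = k
  · subst h
    simp [hyb, Function.update_self]
  · rw [Function.update_of_ne h]
    have hv : (i : ℕ) ≠ (k : ℕ) := fun hc => h (Fin.ext hc)
    simp only [hyb]
    by_cases h2 : (i : ℕ) < k
    · rw [if_pos h2, if_pos (by omega)]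
    · rw [if_neg h2, if_neg (by omega)]

lemma hyb_invol (k : ℕ) (e e' : Fin N → A) : hyb k (hyb k e e') (hyb k e' e) = e := by
  funext i
  simp only [hyb]
  by_cases h : (i : ℕ) < k <;> simp [h]

/-- the quantity interpolating between `∑ pw f²` and `(∑ pw f)²`. -/
noncomputable def Vq (w : Fin N → A → ℝ) (f : (Fin N → A) → ℝ) (c : ℕ) : ℝ :=
  ∑ q : (Fin N → A) × (Fin N → A), (pw w q.1 * pw w q.2) * (f q.1 * f (hyb c q.1 q.2))

lemma Vq_zero {w : Fin N → A → ℝ} (hw1 : ∀ i, ∑ a, w i a = 1) (f : (Fin N → A) → ℝ) :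
    Vq w f 0 = ∑ e : Fin N → A, pw w e * f e ^ 2 := by
  unfold Vq
  rw [Fintype.sum_prod_type]
  refine Finset.sum_congr rfl fun e _ => ?_
  simp only [hyb_zero]
  have h : ∀ e' : Fin N → A, (pw w e * pw w e') * (f e * f e) = pw w e' * (pw w e * f e ^ 2) :=
    fun e' => by ring
  simp_rw [h]
  rw [← Finset.sum_mul, sum_pw hw1, one_mul]

lemma Vq_top {w : Fin N → A → ℝ} (hw1 : ∀ i, ∑ a, w i a = 1) (f : (Fin N → A) → ℝ) :
    Vq w f N = (∑ e : Fin N → A, pw w e * f e) ^ 2 := by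
  unfold Vq
  rw [Fintype.sum_prod_type, sq, Finset.sum_mul_sum]
  refine Finset.sum_congr rfl fun e _ => Finset.sum_congr rfl fun e' _ => ?_
  simp only [hyb_top]
  ring
end ES2

section ES3
variable {A : Type*} [Fintype A] [DecidableEq A] {N : ℕ}

lemma hyb_sigma_fst (k : Fin N) (e e' : Fin N → A) :
    hyb (k : ℕ) (Function.update e k (e' k)) (Function.update e' k (e k)) =
      hyb ((k : ℕ) + 1) e e' := by
  funext i
  by_cases h2 : i = k
  · subst h2
    simp [hyb]
  · have hv : (i : ℕ) ≠ (k : ℕ) := fun hc => h2 (Fin.ext hc)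
    simp only [hyb, Function.update_of_ne h2]
    by_cases h : (i : ℕ) < k
    · rw [if_pos h, if_pos (by omega)]
    · rw [if_neg h, if_neg (by omega)]

lemma hyb_sigma_snd (k : Fin N) (e e' : Fin N → A) :
    hyb ((k : ℕ) + 1) (Function.update e k (e' k)) (Function.update e' k (e k)) =
      hyb (k : ℕ) e e' := by
  funext i
  by_cases h2 : i = k
  · subst h2
    simp [hyb]
  · have hv : (i : ℕ) ≠ (k : ℕ) := fun hc => h2 (Fin.ext hc)
    simp only [hyb, Function.update_of_ne h2]
    by_cases h : (i : ℕ) < k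
    · rw [if_pos (by omega), if_pos h]
    · rw [if_neg (by omega), if_neg h]

lemma Vq_step {w : Fin N → A → ℝ} (hw0 : ∀ i a, 0 ≤ w i a) (k : Fin N)
    (f : (Fin N → A) → ℝ) :
    Vq w f k - Vq w f ((k : ℕ) + 1) ≤ (1/2) *
      ∑ q : (Fin N → A) × (Fin N → A), (pw w q.1 * pw w q.2) *
        (f q.1 - f (Function.update q.1 k (q.2 k))) ^ 2 := by
  classical
  have hσinv : Function.Involutive (fun q : (Fin N → A) × (Fin N → A) =>
      (Function.update q.1 k (q.2 k), Function.update q.2 k (q.1 k))) := by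
    rintro ⟨e, e'⟩
    simp [Function.update_idem, Function.update_eq_self]
  set σ := hσinv.toPerm _ with hσdef
  have hσapp : ∀ q : (Fin N → A) × (Fin N → A),
      σ q = (Function.update q.1 k (q.2 k), Function.update q.2 k (q.1 k)) := fun q => rfl
  have hτinv : Function.Involutive (fun q : (Fin N → A) × (Fin N → A) =>
      (hyb (k : ℕ) q.1 q.2, hyb (k : ℕ) q.2 q.1)) := by
    rintro ⟨e, e'⟩
    simp [hyb_invol]
  set τ := hτinv.toPerm _ with hτdef
  have hτapp : ∀ q : (Fin N → A) × (Fin N → A),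
      τ q = (hyb (k : ℕ) q.1 q.2, hyb (k : ℕ) q.2 q.1) := fun q => rfl
  -- Q invariance under σ
  have hQσ : ∀ e e' : Fin N → A,
      pw w (Function.update e k (e' k)) * pw w (Function.update e' k (e k)) =
        pw w e * pw w e' := by
    intro e e'
    rw [pw_update, pw_update, pw_eq_mul_erase w k e, pw_eq_mul_erase w k e']
    ring
  -- Q invariance under τ
  have hQτ : ∀ e e' : Fin N → A,
      pw w (hyb (k : ℕ) e e') * pw w (hyb (k : ℕ) e' e) = pw w e * pw w e' := by
    intro e e'
    unfold pw
    rw [← Finset.prod_mul_distrib, ← Finset.prod_mul_distrib]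
    refine Finset.prod_congr rfl fun i _ => ?_
    by_cases h : (i : ℕ) < k <;> simp [hyb, h] <;> ring
  -- main rewriting
  have hD : Vq w f k - Vq w f ((k : ℕ) + 1) =
      ∑ q : (Fin N → A) × (Fin N → A), (pw w q.1 * pw w q.2) *
        (f q.1 * (f (hyb (k : ℕ) q.1 q.2) - f (hyb ((k : ℕ) + 1) q.1 q.2))) := by
    unfold Vq
    rw [← Finset.sum_sub_distrib]
    exact Finset.sum_congr rfl fun q _ => by ring
  have hσsum : ∑ q : (Fin N → A) × (Fin N → A), (pw w q.1 * pw w q.2) *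
        (f q.1 * (f (hyb (k : ℕ) q.1 q.2) - f (hyb ((k : ℕ) + 1) q.1 q.2))) =
      ∑ q : (Fin N → A) × (Fin N → A), (pw w q.1 * pw w q.2) *
        (f (Function.update q.1 k (q.2 k)) *
          (f (hyb ((k : ℕ) + 1) q.1 q.2) - f (hyb (k : ℕ) q.1 q.2))) := by
    rw [← Equiv.sum_comp σ (fun q : (Fin N → A) × (Fin N → A) => (pw w q.1 * pw w q.2) *
        (f q.1 * (f (hyb (k : ℕ) q.1 q.2) - f (hyb ((k : ℕ) + 1) q.1 q.2))))]
    refine Finset.sum_congr rfl fun q _ => ?_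
    rcases q with ⟨e, e'⟩
    rw [hσapp]
    simp only
    rw [hQσ, hyb_sigma_fst, hyb_sigma_snd]
  have h2D : 2 * (Vq w f k - Vq w f ((k : ℕ) + 1)) =
      ∑ q : (Fin N → A) × (Fin N → A), (pw w q.1 * pw w q.2) *
        ((f q.1 - f (Function.update q.1 k (q.2 k))) *
          (f (hyb (k : ℕ) q.1 q.2) - f (hyb ((k : ℕ) + 1) q.1 q.2))) := by
    rw [two_mul, hD]
    nth_rewrite 2 [hσsum]
    rw [← Finset.sum_add_distrib]
    exact Finset.sum_congr rfl fun q _ => by ring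
  -- the τ symmetry for the B-term
  have hτsum : ∑ q : (Fin N → A) × (Fin N → A), (pw w q.1 * pw w q.2) *
        (f (hyb (k : ℕ) q.1 q.2) - f (hyb ((k : ℕ) + 1) q.1 q.2)) ^ 2 =
      ∑ q : (Fin N → A) × (Fin N → A), (pw w q.1 * pw w q.2) *
        (f q.1 - f (Function.update q.1 k (q.2 k))) ^ 2 := by
    rw [← Equiv.sum_comp τ (fun q : (Fin N → A) × (Fin N → A) => (pw w q.1 * pw w q.2) *
        (f q.1 - f (Function.update q.1 k (q.2 k))) ^ 2)]
    refine Finset.sum_congr rfl fun q _ => ?_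
    rcases q with ⟨e, e'⟩
    rw [hτapp]
    simp only
    rw [hQτ]
    congr 2
    have hk : (hyb (k : ℕ) e' e) k = e' k := by simp [hyb]
    rw [hk, ← hyb_succ]
  -- pointwise AM-GM and conclusion
  have hpt : ∀ q : (Fin N → A) × (Fin N → A), (pw w q.1 * pw w q.2) *
        ((f q.1 - f (Function.update q.1 k (q.2 k))) *
          (f (hyb (k : ℕ) q.1 q.2) - f (hyb ((k : ℕ) + 1) q.1 q.2))) ≤
      (pw w q.1 * pw w q.2) / 2 *
        ((f q.1 - f (Function.update q.1 k (q.2 k))) ^ 2 +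
          (f (hyb (k : ℕ) q.1 q.2) - f (hyb ((k : ℕ) + 1) q.1 q.2)) ^ 2) := by
    intro q
    have hQ0 : 0 ≤ pw w q.1 * pw w q.2 :=
      mul_nonneg (pw_nonneg hw0 _) (pw_nonneg hw0 _)
    nlinarith [sq_nonneg ((f q.1 - f (Function.update q.1 k (q.2 k))) -
      (f (hyb (k : ℕ) q.1 q.2) - f (hyb ((k : ℕ) + 1) q.1 q.2))), hQ0,
      mul_le_mul_of_nonneg_left (sq_nonneg ((f q.1 - f (Function.update q.1 k (q.2 k))) -
      (f (hyb (k : ℕ) q.1 q.2) - f (hyb ((k : ℕ) + 1) q.1 q.2)))) hQ0]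
  have hsum_le := Finset.sum_le_sum (fun q (_ : q ∈ Finset.univ) => hpt q)
  rw [← h2D] at hsum_le
  have hsplit : ∑ q : (Fin N → A) × (Fin N → A), (pw w q.1 * pw w q.2) / 2 *
        ((f q.1 - f (Function.update q.1 k (q.2 k))) ^ 2 +
          (f (hyb (k : ℕ) q.1 q.2) - f (hyb ((k : ℕ) + 1) q.1 q.2)) ^ 2) =
      (1/2) * (∑ q : (Fin N → A) × (Fin N → A), (pw w q.1 * pw w q.2) *
          (f q.1 - f (Function.update q.1 k (q.2 k))) ^ 2) +
      (1/2) * (∑ q : (Fin N → A) × (Fin N → A), (pw w q.1 * pw w q.2) *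
          (f (hyb (k : ℕ) q.1 q.2) - f (hyb ((k : ℕ) + 1) q.1 q.2)) ^ 2) := by
    rw [Finset.mul_sum, Finset.mul_sum, ← Finset.sum_add_distrib]
    exact Finset.sum_congr rfl fun q _ => by ring
  rw [hsplit, hτsum] at hsum_le
  linarith
end ES3

section ES4
variable {A : Type*} [Fintype A] [DecidableEq A] {N : ℕ}

lemma pair_marginal {w : Fin N → A → ℝ} (hw0 : ∀ i a, 0 ≤ w i a)
    (hw1 : ∀ i, ∑ a, w i a = 1) (k : Fin N) (f : (Fin N → A) → ℝ) :
    ∑ q : (Fin N → A) × (Fin N → A), (pw w q.1 * pw w q.2) *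
        (f q.1 - f (Function.update q.1 k (q.2 k))) ^ 2 =
      ∑ e : Fin N → A, ∑ a : A, pw w e * w k a * (f e - f (Function.update e k a)) ^ 2 := by
  rw [Fintype.sum_prod_type]
  refine Finset.sum_congr rfl fun e _ => ?_
  have h1 : ∀ e' : Fin N → A, (pw w e * pw w e') *
      (f e - f (Function.update e k (e' k))) ^ 2 =
      pw w e * (pw w e' * (f e - f (Function.update e k (e' k))) ^ 2) := fun e' => by ring
  simp_rw [h1]
  rw [← Finset.mul_sum,
    marginal hw1 k (fun a => (f e - f (Function.update e k a)) ^ 2), Finset.mul_sum]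
  exact Finset.sum_congr rfl fun a _ => by ring

theorem efron_stein {w : Fin N → A → ℝ} (hw0 : ∀ i a, 0 ≤ w i a)
    (hw1 : ∀ i, ∑ a, w i a = 1) (f : (Fin N → A) → ℝ) :
    (∑ e : Fin N → A, pw w e * f e ^ 2) - (∑ e : Fin N → A, pw w e * f e) ^ 2 ≤
      (1/2) * ∑ k : Fin N, ∑ e : Fin N → A, ∑ a : A,
        pw w e * w k a * (f e - f (Function.update e k a)) ^ 2 := by
  have htel : Vq w f 0 - Vq w f N = ∑ k ∈ Finset.range N, (Vq w f k - Vq w f (k + 1)) :=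
    (Finset.sum_range_sub' (Vq w f) N).symm
  have hbd : ∀ k : Fin N, Vq w f (k : ℕ) - Vq w f ((k : ℕ) + 1) ≤
      (1/2) * ∑ e : Fin N → A, ∑ a : A,
        pw w e * w k a * (f e - f (Function.update e k a)) ^ 2 := by
    intro k
    have := Vq_step hw0 k f
    rwa [pair_marginal hw0 hw1 k f] at this
  calc (∑ e : Fin N → A, pw w e * f e ^ 2) - (∑ e : Fin N → A, pw w e * f e) ^ 2
      = Vq w f 0 - Vq w f N := by rw [Vq_zero hw1, Vq_top hw1]
    _ = ∑ k ∈ Finset.range N, (Vq w f k - Vq w f (k + 1)) := htel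
    _ = ∑ k : Fin N, (Vq w f (k : ℕ) - Vq w f ((k : ℕ) + 1)) := Finset.sum_range _
    _ ≤ ∑ k : Fin N, (1/2) * ∑ e : Fin N → A, ∑ a : A,
          pw w e * w k a * (f e - f (Function.update e k a)) ^ 2 :=
        Finset.sum_le_sum fun k _ => hbd k
    _ = (1/2) * ∑ k : Fin N, ∑ e : Fin N → A, ∑ a : A,
          pw w e * w k a * (f e - f (Function.update e k a)) ^ 2 :=
        (Finset.mul_sum _ _ _).symm
end ES4

section Glue
variable {m n : ℕ}

lemma FSet_le {α : Type*} {n n' : ℕ} {x : Fin n → α} {y : Fin n' → α} {r : ℕ}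
    (hr : r ∈ FSet x y) : r ≤ n := by
  obtain ⟨π, η, hπ, hη, h⟩ := hr
  simpa using Fintype.card_le_of_injective π hπ.injective

/-- the LCS functional on the product space coding the pair of words -/
noncomputable def gfun (m n : ℕ) (e : Fin (n + n) → Fin (m + 1)) : ℝ :=
  (flcs (fun i : Fin n => e (Fin.castAdd n i)) (fun i : Fin n => e (Fin.natAdd n i)) : ℝ)

/-- the coordinate weights -/
noncomputable def wfun (m n : ℕ) (p : ℝ) : Fin (n + n) → Fin (m + 1) → ℝ := fun k a =>
  if (k : ℕ) < n then (if (a : ℕ) < m then (1 - p) / m else p)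
  else (if (a : ℕ) < m then 1 / m else 0)

lemma gfun_nonneg (e : Fin (n + n) → Fin (m + 1)) : 0 ≤ gfun m n e := Nat.cast_nonneg _

lemma gfun_le (e : Fin (n + n) → Fin (m + 1)) : gfun m n e ≤ n := by
  have := FSet_le (flcs_mem (fun i : Fin n => e (Fin.castAdd n i))
    (fun i : Fin n => e (Fin.natAdd n i)))
  unfold gfun
  exact_mod_cast this

lemma gfun_update_sq_le (e : Fin (n + n) → Fin (m + 1)) (k : Fin (n + n)) (a : Fin (m + 1)) :
    (gfun m n e - gfun m n (Function.update e k a)) ^ 2 ≤ 1 := by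
  by_cases hk : (k : ℕ) < n
  · set k₁ : Fin n := ⟨k, hk⟩ with hk₁
    have hcast : Fin.castAdd n k₁ = k := Fin.ext rfl
    have hx : (fun i : Fin n => Function.update e k a (Fin.castAdd n i)) =
        Function.update (fun i : Fin n => e (Fin.castAdd n i)) k₁ a := by
      funext i
      by_cases hi : i = k₁
      · subst hi; rw [hcast, Function.update_self, Function.update_self]
      · rw [Function.update_of_ne hi, Function.update_of_ne]
        intro hc
        apply hi
        apply Fin.ext
        have := congrArg Fin.val (hc.trans hcast.symm)
        simpa using this
    have hy : (fun i : Fin n => Function.update e k a (Fin.natAdd n i)) =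
        (fun i : Fin n => e (Fin.natAdd n i)) := by
      funext i
      rw [Function.update_of_ne]
      intro hc
      have := congrArg Fin.val hc
      simp only [Fin.coe_natAdd] at this
      omega
    unfold gfun
    rw [hx, hy]
    exact flcs_update_dist _ _ _ _
  · have hk2 : (k : ℕ) - n < n := by have := k.isLt; omega
    obtain ⟨k₂, hk₂⟩ : ∃ k₂ : Fin n, (k₂ : ℕ) = (k : ℕ) - n := ⟨⟨_, hk2⟩, rfl⟩
    have hcast : Fin.natAdd n k₂ = k := by
      apply Fin.ext
      rw [Fin.coe_natAdd, hk₂]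
      have := k.isLt
      omega
    have hy : (fun i : Fin n => Function.update e k a (Fin.natAdd n i)) =
        Function.update (fun i : Fin n => e (Fin.natAdd n i)) k₂ a := by
      funext i
      by_cases hi : i = k₂
      · subst hi; rw [hcast, Function.update_self, Function.update_self]
      · rw [Function.update_of_ne hi, Function.update_of_ne]
        intro hc
        have h1 := congrArg Fin.val (hc.trans hcast.symm)
        simp only [Fin.coe_natAdd] at h1
        exact hi (Fin.ext (by omega))
    have hx : (fun i : Fin n => Function.update e k a (Fin.castAdd n i)) =
        (fun i : Fin n => e (Fin.castAdd n i)) := by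
      funext i
      rw [Function.update_of_ne]
      intro hc
      have h1 := congrArg Fin.val hc
      simp only [Fin.coe_castAdd] at h1
      have := i.isLt
      omega
    unfold gfun
    rw [hx, hy, flcs_comm (fun i : Fin n => e (Fin.castAdd n i)),
      flcs_comm (fun i : Fin n => e (Fin.castAdd n i))]
    exact flcs_update_dist _ _ _ _

lemma sum_if_fin (m : ℕ) (c d : ℝ) :
    ∑ a : Fin (m + 1), (if (a : ℕ) < m then c else d) = m * c + d := by
  rw [Fin.sum_univ_castSucc]
  have h1 : ∀ a : Fin m, (if ((Fin.castSucc a : Fin (m+1)) : ℕ) < m then c else d) = c := by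
    intro a
    rw [if_pos]
    simpa using a.isLt
  simp only [h1, Fin.val_last, lt_irrefl, if_neg (lt_irrefl m)]
  simp [mul_comm]

lemma wfun_nonneg (p : ℝ) (hp0 : 0 < p) (hp1 : p < 1) (k : Fin (n + n)) (a : Fin (m + 1)) :
    0 ≤ wfun m n p k a := by
  unfold wfun
  have h1 : (0:ℝ) ≤ (m:ℝ) := Nat.cast_nonneg m
  split_ifs
  · exact div_nonneg (by linarith) h1
  · linarith
  · exact div_nonneg (by linarith) h1
  · exact le_refl 0

lemma wfun_sum (p : ℝ) (hm : 1 ≤ m) (k : Fin (n + n)) :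
    ∑ a : Fin (m + 1), wfun m n p k a = 1 := by
  have hm0 : (m : ℝ) ≠ 0 := Nat.cast_ne_zero.2 (by omega)
  unfold wfun
  split_ifs
  · rw [sum_if_fin]; field_simp; ring
  · rw [sum_if_fin]; field_simp; ring

lemma wfun_sum_sq (p : ℝ) (hm : 1 ≤ m) (k : Fin (n + n)) :
    ∑ a : Fin (m + 1), wfun m n p k a ^ 2 =
      if (k : ℕ) < n then (1 - p) ^ 2 / (m:ℝ) + p ^ 2 else 1 / (m:ℝ) := by
  have hm0 : (m : ℝ) ≠ 0 := Nat.cast_ne_zero.2 (by omega)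
  unfold wfun
  split_ifs
  · have : ∀ a : Fin (m+1), (if (a : ℕ) < m then (1 - p)/m else p) ^ 2 =
        (if (a : ℕ) < m then ((1 - p)/m) ^ 2 else p ^ 2) := fun a => by split_ifs <;> rfl
    simp_rw [this]
    rw [sum_if_fin]
    rw [div_pow]
    field_simp
  · have : ∀ a : Fin (m+1), (if (a : ℕ) < m then 1/(m:ℝ) else (0:ℝ)) ^ 2 =
        (if (a : ℕ) < m then (1/(m:ℝ)) ^ 2 else 0) := fun a => by split_ifs <;> simp
    simp_rw [this]
    rw [sum_if_fin]
    field_simp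
    ring
end Glue

section Central
variable {m n : ℕ}

theorem central_bound (hm : 2 ≤ m) (p : ℝ) (hp0 : 0 < p) (hp1 : p < 1) :
    (∑ e : Fin (n+n) → Fin (m+1), pw (wfun m n p) e * gfun m n e ^ 2) -
      (∑ e : Fin (n+n) → Fin (m+1), pw (wfun m n p) e * gfun m n e) ^ 2 ≤
      (n : ℝ) / 2 * (2 - p ^ 2 - (1 + (1 - p) ^ 2) / m) := by
  have hm1 : 1 ≤ m := by omega
  have hm0 : (m : ℝ) ≠ 0 := Nat.cast_ne_zero.2 (by omega)
  have hw0 := wfun_nonneg (n := n) (m := m) p hp0 hp1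
  have hw1 := wfun_sum (n := n) (m := m) p hm1
  refine le_trans (efron_stein hw0 hw1 (gfun m n)) ?_
  have hterm : ∀ k : Fin (n+n),
      (∑ e : Fin (n+n) → Fin (m+1), ∑ a : Fin (m+1),
        pw (wfun m n p) e * wfun m n p k a *
          (gfun m n e - gfun m n (Function.update e k a)) ^ 2) ≤
      1 - ∑ a : Fin (m+1), wfun m n p k a ^ 2 := by
    intro k
    have hle : ∀ e : Fin (n+n) → Fin (m+1), ∀ a : Fin (m+1),
        pw (wfun m n p) e * wfun m n p k a *
          (gfun m n e - gfun m n (Function.update e k a)) ^ 2 ≤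
        pw (wfun m n p) e * (wfun m n p k a * (if e k = a then 0 else 1)) := by
      intro e a
      by_cases h : e k = a
      · rw [if_pos h, ← h, Function.update_eq_self]
        simp
      · rw [if_neg h, mul_one, mul_assoc]
        refine mul_le_mul_of_nonneg_left ?_ (pw_nonneg hw0 e)
        calc wfun m n p k a * (gfun m n e - gfun m n (Function.update e k a)) ^ 2
            ≤ wfun m n p k a * 1 :=
              mul_le_mul_of_nonneg_left (gfun_update_sq_le e k a) (hw0 k a)
          _ = wfun m n p k a := mul_one _
    have step1 := Finset.sum_le_sum (fun e (_ : e ∈ Finset.univ) =>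
      Finset.sum_le_sum (fun a (_ : a ∈ Finset.univ) => hle e a))
    refine le_trans step1 (le_of_eq ?_)
    have inner : ∀ e : Fin (n+n) → Fin (m+1),
        ∑ a : Fin (m+1), wfun m n p k a * (if e k = a then 0 else 1) =
          1 - wfun m n p k (e k) := by
      intro e
      have : ∀ a : Fin (m+1), wfun m n p k a * (if e k = a then 0 else 1) =
          wfun m n p k a - (if e k = a then wfun m n p k a else 0) := by
        intro a; split_ifs <;> ring
      simp_rw [this]
      rw [Finset.sum_sub_distrib, hw1 k, Finset.sum_ite_eq]
      simp
    have h2 : ∀ e : Fin (n+n) → Fin (m+1),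
        pw (wfun m n p) e * (1 - wfun m n p k (e k)) =
          pw (wfun m n p) e - pw (wfun m n p) e * wfun m n p k (e k) := fun e => by ring
    calc ∑ e : Fin (n+n) → Fin (m+1), ∑ a : Fin (m+1),
          pw (wfun m n p) e * (wfun m n p k a * (if e k = a then 0 else 1))
        = ∑ e : Fin (n+n) → Fin (m+1), pw (wfun m n p) e * (1 - wfun m n p k (e k)) := by
          refine Finset.sum_congr rfl fun e _ => ?_
          rw [← Finset.mul_sum, inner e]
      _ = (∑ e : Fin (n+n) → Fin (m+1), pw (wfun m n p) e) -
            ∑ e : Fin (n+n) → Fin (m+1), pw (wfun m n p) e * wfun m n p k (e k) := by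
          simp_rw [h2]
          rw [Finset.sum_sub_distrib]
      _ = 1 - ∑ a : Fin (m+1), wfun m n p k a * wfun m n p k a := by
          rw [sum_pw hw1, marginal hw1 k (wfun m n p k)]
      _ = 1 - ∑ a : Fin (m+1), wfun m n p k a ^ 2 := by
          congr 1
          exact Finset.sum_congr rfl fun a _ => (sq (wfun m n p k a)).symm
  have hhalf : (0:ℝ) ≤ 1/2 := by norm_num
  refine le_trans (mul_le_mul_of_nonneg_left (Finset.sum_le_sum
    (fun k (_ : k ∈ Finset.univ) => hterm k)) hhalf) (le_of_eq ?_)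
  have hsq := wfun_sum_sq (n := n) (m := m) p hm1
  have hsum : ∑ k : Fin (n+n), (1 - ∑ a : Fin (m+1), wfun m n p k a ^ 2) =
      (n : ℝ) * (1 - ((1 - p) ^ 2 / (m:ℝ) + p ^ 2)) + (n : ℝ) * (1 - 1 / (m:ℝ)) := by
    rw [Fin.sum_univ_add]
    congr 1
    · have : ∀ i : Fin n, (1 - ∑ a : Fin (m+1), wfun m n p (Fin.castAdd n i) a ^ 2) =
          1 - ((1 - p) ^ 2 / (m:ℝ) + p ^ 2) := by
        intro i
        rw [hsq (Fin.castAdd n i), if_pos (by simpa using i.isLt)]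
      simp_rw [this]
      rw [Finset.sum_const, Finset.card_univ, Fintype.card_fin, nsmul_eq_mul]
    · have : ∀ i : Fin n, (1 - ∑ a : Fin (m+1), wfun m n p (Fin.natAdd n i) a ^ 2) =
          1 - 1 / (m:ℝ) := by
        intro i
        rw [hsq (Fin.natAdd n i), if_neg (by simp)]
      simp_rw [this]
      rw [Finset.sum_const, Finset.card_univ, Fintype.card_fin, nsmul_eq_mul]
  rw [hsum]
  field_simp
  ring
end Central

/-- For all `n ≥ 1`,
`Var (LCₙ) ≤ (n/2) (2 − p² − (1 + (1−p)²)/m)`. -/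
theorem stmt_1 {Ω : Type*} [MeasurableSpace Ω] (μ : Measure Ω) [IsProbabilityMeasure μ]
    (m : ℕ) (hm : 2 ≤ m) (p : ℝ) (hp0 : 0 < p) (hp1 : p < 1)
    (X Y : ℕ → Ω → Fin (m + 1))
    (hXmeas : ∀ i, Measurable (X i)) (hYmeas : ∀ i, Measurable (Y i))
    (hindep : iIndepFun (Sum.elim X Y) μ)
    (hX : ∀ i (a : Fin (m + 1)),
      μ {ω | X i ω = a} = ENNReal.ofReal (if (a : ℕ) < m then (1 - p) / m else p))
    (hY : ∀ i (a : Fin (m + 1)),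
      μ {ω | Y i ω = a} = ENNReal.ofReal (if (a : ℕ) < m then 1 / m else 0)) :
    ∀ n : ℕ, 1 ≤ n →
      variance (fun ω =>
        (lcsLength (List.ofFn fun i : Fin n => X i ω)
          (List.ofFn fun i : Fin n => Y i ω) : ℝ)) μ ≤
        (n : ℝ) / 2 * (2 - p ^ 2 - (1 + (1 - p) ^ 2) / m) := by
  intro n hn
  classical
  have hm1 : 1 ≤ m := by omega
  set W : Fin (n+n) → Ω → Fin (m+1) :=
    fun k ω => if (k : ℕ) < n then X k ω else Y ((k : ℕ) - n) ω with hW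
  have hWmeas : ∀ k, Measurable (W k) := by
    intro k
    rw [hW]
    dsimp only
    split_ifs
    exacts [hXmeas _, hYmeas _]
  set Wvec : Ω → (Fin (n+n) → Fin (m+1)) := fun ω k => W k ω with hWvecdef
  have hWvec : Measurable Wvec := measurable_pi_lambda _ hWmeas
  set V : Ω → ℝ := fun ω => gfun m n (Wvec ω) with hV
  -- identification of the LCS functional
  have hfun : (fun ω => (lcsLength (List.ofFn fun i : Fin n => X i ω)
      (List.ofFn fun i : Fin n => Y i ω) : ℝ)) = V := by
    funext ω
    rw [hV]
    dsimp only
    unfold gfun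
    congr 1
    rw [lcsLength_ofFn]
    congr 1
    · funext i
      have : ((Fin.castAdd n i : Fin (n+n)) : ℕ) < n := by simpa using i.isLt
      simp only [hWvecdef, hW, this, if_pos]
      congr 1
    · funext i
      have h1 : ¬ ((Fin.natAdd n i : Fin (n+n)) : ℕ) < n := by simp
      simp only [hWvecdef, hW, h1, if_neg, if_false]
      congr 1
      simp [Fin.coe_natAdd]
  -- the law of the coded word pair
  have hw0 := wfun_nonneg (n := n) (m := m) p hp0 hp1
  have hlaw : ∀ e : Fin (n+n) → Fin (m+1),
      (Measure.map Wvec μ) {e} = ENNReal.ofReal (pw (wfun m n p) e) := by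
    intro e
    rw [Measure.map_apply hWvec (measurableSet_singleton e)]
    have hset : Wvec ⁻¹' {e} = ⋂ k, W k ⁻¹' {e k} := by
      ext ω
      simp [hWvecdef, Set.mem_iInter, funext_iff]
    -- injection into the index type of the independent family
    set φ : Fin (n+n) → ℕ ⊕ ℕ :=
      fun k => if (k : ℕ) < n then Sum.inl (k : ℕ) else Sum.inr ((k : ℕ) - n) with hφ
    have hφinj : Function.Injective φ := by
      intro k1 k2 h
      have e1 := k1.isLt
      have e2 := k2.isLt
      apply Fin.ext
      by_cases h1 : (k1 : ℕ) < n <;> by_cases h2 : (k2 : ℕ) < n <;>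
        simp only [hφ, h1, h2, if_pos, if_neg, if_true, if_false] at h <;>
        simp only [Sum.inl.injEq, Sum.inr.injEq, reduceCtorEq] at h <;> omega
    set c : ℕ ⊕ ℕ → Set (Fin (m+1)) := fun j =>
      Sum.elim (fun i => if h : i < n then {e (Fin.castAdd n ⟨i, h⟩)} else Set.univ)
        (fun i => if h : i < n then {e (Fin.natAdd n ⟨i, h⟩)} else Set.univ) j with hc
    have hck : ∀ k : Fin (n+n), c (φ k) = {e k} := by
      intro k
      by_cases hk : (k : ℕ) < n
      · simp only [hφ, hc, hk, if_pos, Sum.elim_inl, dif_pos]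
        congr 1
      · have hk2 : (k : ℕ) - n < n := by have := k.isLt; omega
        simp only [hφ, hc, hk, if_neg, if_false, Sum.elim_inr, dif_pos hk2]
        congr 2
        apply Fin.ext
        simp only [Fin.coe_natAdd]
        omega
    have helim : ∀ k : Fin (n+n), W k = Sum.elim X Y (φ k) := by
      intro k
      by_cases hk : (k : ℕ) < n <;> simp [hW, hφ, hk]
    have hmeasets : ∀ j ∈ Finset.image φ Finset.univ, MeasurableSet (c j) := by
      intro j _
      rcases j with i | i <;> simp only [hc, Sum.elim_inl, Sum.elim_inr] <;> split_ifs <;>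
        first
          | exact measurableSet_singleton _
          | exact MeasurableSet.univ
    have key := hindep.measure_inter_preimage_eq_mul (Finset.image φ Finset.univ) hmeasets
    have hseteq : (⋂ j ∈ Finset.image φ Finset.univ, Sum.elim X Y j ⁻¹' c j) =
        ⋂ k, W k ⁻¹' {e k} := by
      ext ω
      simp only [Set.mem_iInter, Finset.mem_image, Finset.mem_univ, true_and]
      constructor
      · intro h k
        have := h (φ k) ⟨k, rfl⟩
        rwa [hck k, ← helim k] at this
      · rintro h j ⟨k, rfl⟩
        rw [hck k, ← helim k]
        exact h k
    have hprodeq : (∏ j ∈ Finset.image φ Finset.univ, μ (Sum.elim X Y j ⁻¹' c j)) =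
        ∏ k : Fin (n+n), μ (W k ⁻¹' {e k}) := by
      rw [Finset.prod_image (fun k _ k' _ h => hφinj h)]
      refine Finset.prod_congr rfl fun k _ => ?_
      rw [hck k, ← helim k]
    have hcoord : ∀ k : Fin (n+n),
        μ (W k ⁻¹' {e k}) = ENNReal.ofReal (wfun m n p k (e k)) := by
      intro k
      by_cases hk : (k : ℕ) < n
      · have hs : W k ⁻¹' {e k} = {ω | X (k : ℕ) ω = e k} := by
          ext ω; simp [hW, hk]
        rw [hs, hX (k : ℕ) (e k)]
        simp [wfun, hk]
      · have hs : W k ⁻¹' {e k} = {ω | Y ((k : ℕ) - n) ω = e k} := by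
          ext ω; simp [hW, hk]
        rw [hs, hY ((k : ℕ) - n) (e k)]
        simp [wfun, hk]
    rw [hset, ← hseteq, key, hprodeq]
    have : ∀ k : Fin (n+n), μ (W k ⁻¹' {e k}) = ENNReal.ofReal (wfun m n p k (e k)) := hcoord
    simp_rw [this]
    rw [← ENNReal.ofReal_prod_of_nonneg (fun k _ => hw0 k (e k))]
    rfl
  -- integrals of functions of the word pair
  have hprob : IsProbabilityMeasure (Measure.map Wvec μ) :=
    Measure.isProbabilityMeasure_map hWvec.aemeasurable
  have hint : ∀ h : (Fin (n+n) → Fin (m+1)) → ℝ,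
      ∫ ω, h (Wvec ω) ∂μ = ∑ e : Fin (n+n) → Fin (m+1), pw (wfun m n p) e * h e := by
    intro h
    rw [← integral_map hWvec.aemeasurable (measurable_of_countable h).aestronglyMeasurable]
    rw [integral_fintype Integrable.of_finite]
    refine Finset.sum_congr rfl fun e _ => ?_
    rw [Measure.real, hlaw e, ENNReal.toReal_ofReal (pw_nonneg hw0 e), smul_eq_mul]
  -- variance computation
  have hVmeas : AEStronglyMeasurable V μ :=
    ((measurable_of_countable (gfun m n)).comp hWvec).aestronglyMeasurable
  have hVbdd : ∀ᵐ ω ∂μ, V ω ∈ Set.Icc (0 : ℝ) n :=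
    Filter.Eventually.of_forall fun ω => ⟨gfun_nonneg _, gfun_le _⟩
  have hmem : MemLp V 2 μ := memLp_of_bounded hVbdd hVmeas 2
  rw [hfun, variance_eq_sub hmem]
  have h1 : ∫ ω, (V ^ 2) ω ∂μ =
      ∑ e : Fin (n+n) → Fin (m+1), pw (wfun m n p) e * gfun m n e ^ 2 := by
    have hc : (V ^ 2) = fun ω => (fun e => gfun m n e ^ 2) (Wvec ω) := by
      funext ω; simp [hV]
    rw [hc, hint]
  have h2 : ∫ ω, V ω ∂μ =
      ∑ e : Fin (n+n) → Fin (m+1), pw (wfun m n p) e * gfun m n e := by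
    rw [hV]
    exact hint (gfun m n)
  rw [h1, h2]
  exact central_bound hm p hp0 hp1
end

section
/- Let D ⊆ ℝ, let h ≥ 0 and c > 0, and let f : D → ℤ satisfy f(j) − f(i) ≥ c·(j − i) for all i, j ∈ D with j ≥ i + h. Let T be a D-valued random variable with E|T|² < ∞ and E|f(T)|² < ∞. Then Var(f(T)) ≥ (c²/2)·(Var(T) − h²). -/
/-!
For two independent copies `T, T'` of `T` one has `E (T - T')² = 2 Var T`, and likewise for
`f(T)`. Pointwise, `(f b - f a)² ≥ c² ((b - a)² - h²)`: when `|b - a| ≥ h` the hypothesis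
can be squared, and otherwise the right-hand side is nonpositive. Integrating against the
product measure gives `2 Var f(T) ≥ c² (2 Var T - h²)`, which is stronger than the claim.
-/

open MeasureTheory ProbabilityTheory

lemma sq_mul_sq_sub_le_sq_sub {D : Set ℝ} {h c : ℝ} (hc : 0 ≤ c) {g : ℝ → ℝ}
    (hg : ∀ i ∈ D, ∀ j ∈ D, i + h ≤ j → c * (j - i) ≤ g j - g i)
    {x y : ℝ} (hx : x ∈ D) (hy : y ∈ D) :
    c ^ 2 * ((y - x) ^ 2 - h ^ 2) ≤ (g y - g x) ^ 2 := by
  wlog hxy : x ≤ y generalizing x y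
  · have := this hy hx (le_of_not_ge hxy)
    rwa [← neg_sub y x, ← neg_sub (g y) (g x), neg_sq, neg_sq] at this
  rcases le_or_gt (x + h) y with hfar | hnear
  · have hgap := hg x hx y hy hfar
    have hgap_nonneg : 0 ≤ c * (y - x) := mul_nonneg hc (by linarith)
    nlinarith
  · have : (y - x) ^ 2 ≤ h ^ 2 := by nlinarith
    nlinarith [sq_nonneg c, sq_nonneg (g y - g x)]

section TwoCopies

variable {Ω : Type*} [MeasurableSpace Ω] {μ : Measure Ω} [IsProbabilityMeasure μ]
  {X Y : Ω → ℝ}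

lemma integral_prod_sub_eq_zero (hX : Integrable X μ) :
    ∫ p, (X p.1 - X p.2) ∂μ.prod μ = 0 := by
  rw [integral_sub (hX.comp_fst μ) (hX.comp_snd μ), integral_fun_fst, integral_fun_snd]
  simp

lemma integral_prod_sub_sq (hX : MemLp X 2 μ) :
    ∫ p, (X p.1 - X p.2) ^ 2 ∂μ.prod μ = 2 * variance X μ := by
  have hdiff : MemLp (fun p : Ω × Ω => X p.1 - X p.2) 2 (μ.prod μ) :=
    (hX.comp_fst μ).sub (hX.comp_snd μ)
  rw [← variance_of_integral_eq_zero hdiff.aemeasurable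
    (integral_prod_sub_eq_zero (hX.integrable one_le_two)), two_mul]
  simpa only [Pi.neg_apply, variance_neg, ← sub_eq_add_neg] using variance_add_prod hX hX.neg

lemma mul_two_mul_variance_sub_le (hX : MemLp X 2 μ) (hY : MemLp Y 2 μ) {a b : ℝ}
    (hXY : ∀ ω ω', a * ((X ω - X ω') ^ 2 - b) ≤ (Y ω - Y ω') ^ 2) :
    a * (2 * variance X μ - b) ≤ 2 * variance Y μ := by
  have hXint : Integrable (fun p : Ω × Ω => (X p.1 - X p.2) ^ 2) (μ.prod μ) :=
    ((hX.comp_fst μ).sub (hX.comp_snd μ)).integrable_sq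
  calc a * (2 * variance X μ - b)
      = ∫ p, a * ((X p.1 - X p.2) ^ 2 - b) ∂μ.prod μ := by
        rw [integral_const_mul, integral_sub hXint (integrable_const b), integral_prod_sub_sq hX]
        simp
    _ ≤ ∫ p, (Y p.1 - Y p.2) ^ 2 ∂μ.prod μ :=
        integral_mono ((hXint.sub (integrable_const b)).const_mul a)
          ((hY.comp_fst μ).sub (hY.comp_snd μ)).integrable_sq fun p => hXY p.1 p.2
    _ = 2 * variance Y μ := integral_prod_sub_sq hY

end TwoCopies

theorem stmt_4_general {Ω : Type*} [MeasurableSpace Ω] (μ : Measure Ω) [IsProbabilityMeasure μ]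
    (D : Set ℝ) (h c : ℝ) (hc : 0 < c) (f : ℝ → ℤ)
    (hf : ∀ i ∈ D, ∀ j ∈ D, i + h ≤ j → c * (j - i) ≤ (f j : ℝ) - (f i : ℝ))
    (T : Ω → ℝ) (hTD : ∀ ω, T ω ∈ D)
    (hT2 : MemLp T 2 μ)
    (hfT2 : MemLp (fun ω => (f (T ω) : ℝ)) 2 μ) :
    c ^ 2 / 2 * (variance T μ - h ^ 2) ≤ variance (fun ω => (f (T ω) : ℝ)) μ := by
  have hvar := mul_two_mul_variance_sub_le hT2 hfT2 fun ω ω' =>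
    sq_mul_sq_sub_le_sq_sub hc.le hf (hTD ω') (hTD ω)
  have := mul_nonneg (sq_nonneg c) (variance_nonneg T μ)
  linarith

/-- Let `D ⊆ ℝ`, `h ≥ 0`, `c > 0`, and let `f : D → ℤ` satisfy
`f(j) − f(i) ≥ c (j − i)` whenever `i, j ∈ D` and `j ≥ i + h`.  If `T` is a
`D`-valued random variable with `E|T|² < ∞` and `E|f(T)|² < ∞`, then
`Var (f(T)) ≥ (c²/2) (Var T − h²)`. -/
theorem stmt_4 {Ω : Type*} [MeasurableSpace Ω] (μ : Measure Ω) [IsProbabilityMeasure μ]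
    (D : Set ℝ) (h c : ℝ) (hh : 0 ≤ h) (hc : 0 < c) (f : ℝ → ℤ)
    (hf : ∀ i ∈ D, ∀ j ∈ D, i + h ≤ j → c * (j - i) ≤ (f j : ℝ) - (f i : ℝ))
    (T : Ω → ℝ) (hTD : ∀ ω, T ω ∈ D) (hTmeas : Measurable T)
    (hT2 : MemLp T 2 μ) (hfTmeas : Measurable fun ω => (f (T ω) : ℝ))
    (hfT2 : MemLp (fun ω => (f (T ω) : ℝ)) 2 μ) :
    c ^ 2 / 2 * (variance T μ - h ^ 2) ≤ variance (fun ω => (f (T ω) : ℝ)) μ :=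
  stmt_4_general μ D h c hc f hf T hTD hT2 hfT2
end

section
/- Let 0 < ν < 1/m. Then with C_1 = ν·ln( m·(m−1)^{ν−1}·ν^{ν} / (1−ν)^{ν−1} ) > 0, for all n ≥ 1, P( L_n(⌊νn⌋) = ⌊νn⌋ ) ≥ 1 − e^{−C_1·n}; that is, with probability at least 1 − e^{−C_1 n} a word of ⌊νn⌋ i.i.d. letters uniform on {α_1,…,α_m} is a subsequence of Y^{(n)}. -/
open MeasureTheory ProbabilityTheory
open scoped ENNReal

section helpers

open Finset

theorem strictMono_fin_id {L : ℕ} (π : Fin L → Fin L) (hπ : StrictMono π) (i : Fin L) : π i = i := by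
  have hbij : Function.Bijective π := (Finite.injective_iff_bijective).mp hπ.injective
  have h2 : (StrictMono.orderIsoOfSurjective π hπ hbij.2) i = π i := by
    rw [StrictMono.coe_orderIsoOfSurjective]
  rw [Subsingleton.elim (StrictMono.orderIsoOfSurjective π hπ hbij.2) (OrderIso.refl (Fin L))] at h2
  exact h2.symm

theorem lcs_eq_iff {α : Type*} (z y : List α) :
    lcsLength z y = z.length ↔ z.Sublist y := by
  set S : Set ℕ := {r | ∃ π η, IsMatchPair z y r π η} with hS
  have hbdd : ∀ r ∈ S, r ≤ z.length := by
    rintro r ⟨π, η, hπ, -, -⟩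
    simpa using Fintype.card_le_of_injective π hπ.injective
  have hBdd : BddAbove S := ⟨z.length, hbdd⟩
  have h0 : (0 : ℕ) ∈ S := ⟨Fin.elim0, Fin.elim0, fun i => i.elim0, fun i => i.elim0, fun i => i.elim0⟩
  constructor
  · intro h
    have hmem : z.length ∈ S := by rw [← h]; exact Nat.sSup_mem ⟨0, h0⟩ hBdd
    obtain ⟨π, η, hπ, hη, heq⟩ := hmem
    rw [List.sublist_iff_exists_fin_orderEmbedding_get_eq]
    refine ⟨OrderEmbedding.ofStrictMono η hη, fun ix => ?_⟩
    have := heq ix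
    rwa [strictMono_fin_id π hπ ix] at this
  · intro h
    rw [List.sublist_iff_exists_fin_orderEmbedding_get_eq] at h
    obtain ⟨f, hf⟩ := h
    have hmem : z.length ∈ S := ⟨id, f, strictMono_id, f.strictMono, fun i => hf i⟩
    exact le_antisymm (csSup_le ⟨0, h0⟩ hbdd) (le_csSup hBdd hmem)

def Tcnt (m n k : ℕ) : ℕ := ∑ i ∈ range k, n.choose i * (m-1)^(n-i)

theorem Tcnt_zero (m k : ℕ) : Tcnt m 0 (k+1) = 1 := by
  unfold Tcnt
  rw [Finset.sum_range_succ']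
  simp [Nat.choose_eq_zero_iff]

theorem Tcnt_succ (m n k : ℕ) :
    Tcnt m (n+1) (k+1) = Tcnt m n k + (m-1) * Tcnt m n (k+1) := by
  unfold Tcnt
  rw [Finset.sum_range_succ' (fun i => (n+1).choose i * (m-1)^(n+1-i)) k]
  have h1 : ∀ j, (n+1).choose (j+1) * (m-1)^(n+1-(j+1)) =
      n.choose j * (m-1)^(n-j) + n.choose (j+1) * (m-1)^(n-j) := by
    intro j
    rw [Nat.choose_succ_succ, Nat.add_mul]
    congr 2 <;> congr 1 <;> omega
  rw [Finset.sum_congr rfl (fun j _ => h1 j), Finset.sum_add_distrib]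
  have h2 : (∑ j ∈ range k, n.choose (j+1) * (m-1)^(n-j)) + (n+1).choose 0 * (m-1)^(n+1-0) =
      (m-1) * ∑ i ∈ range (k+1), n.choose i * (m-1)^(n-i) := by
    rw [Finset.mul_sum, Finset.sum_range_succ' (fun i => (m-1) * (n.choose i * (m-1)^(n-i))) k]
    congr 1
    · apply Finset.sum_congr rfl
      intro j _
      rcases le_or_gt (j+1) n with h | h
      · rw [show n - j = (n - (j+1)) + 1 by omega, pow_succ]; ring
      · rw [Nat.choose_eq_zero_of_lt h]; ring
    · simp [pow_succ]; ring
  omega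

noncomputable def Ncnt (m n : ℕ) (z : List (Fin m)) : ℕ :=
  Fintype.card {y : Fin n → Fin m // ¬ z.Sublist (List.ofFn y)}

theorem sublist_cons_ne {α : Type*} {a b : α} {z l : List α} (h : b ≠ a) :
    (a::z).Sublist (b::l) ↔ (a::z).Sublist l := by
  constructor
  · intro hs
    rcases List.sublist_cons_iff.mp hs with h1 | ⟨r, hr, hrs⟩
    · exact h1
    · cases hr; exact absurd rfl h
  · exact fun hs => hs.cons b

theorem Ncnt_zero (m : ℕ) (z : List (Fin m)) : Ncnt m 0 z = if z = [] then 0 else 1 := by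
  classical
  unfold Ncnt
  have hofn : ∀ y : Fin 0 → Fin m, List.ofFn y = [] := fun y => by simp
  split_ifs with h
  · subst h; simp [hofn]
  · rw [Fintype.card_eq_one_iff]
    refine ⟨⟨Fin.elim0, by simp [hofn, List.sublist_nil, h]⟩, fun y => ?_⟩
    ext i; exact i.elim0

theorem Ncnt_nil (m n : ℕ) : Ncnt m n ([] : List (Fin m)) = 0 := by
  classical
  unfold Ncnt
  simp

theorem Ncnt_succ (m n : ℕ) (a : Fin m) (z : List (Fin m)) :
    Ncnt m (n+1) (a::z) = Ncnt m n z + (m-1) * Ncnt m (n+1-1) (a::z) := by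
  classical
  have key : Ncnt m (n+1) (a::z)
      = ∑ b : Fin m, Fintype.card {y : Fin n → Fin m // ¬ (a::z).Sublist (b :: List.ofFn y)} := by
    unfold Ncnt
    rw [← Fintype.card_sigma]
    apply Fintype.card_congr
    calc {y : Fin (n+1) → Fin m // ¬ (a::z).Sublist (List.ofFn y)}
        ≃ {p : Fin m × (Fin n → Fin m) // ¬ (a::z).Sublist (p.1 :: List.ofFn p.2)} :=
          (Equiv.subtypeEquiv (Fin.consEquiv (fun _ => Fin m)).symm
            (fun y => by rw [List.ofFn_succ]; rfl))
      _ ≃ Σ b : Fin m, {y : Fin n → Fin m // ¬ (a::z).Sublist (b :: List.ofFn y)} :=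
          Equiv.subtypeProdEquivSigmaSubtype (fun b y => ¬ (a::z).Sublist (b :: List.ofFn y))
  rw [key, ← Finset.add_sum_erase Finset.univ _ (Finset.mem_univ a)]
  have h1 : Fintype.card {y : Fin n → Fin m // ¬ (a::z).Sublist (a :: List.ofFn y)} = Ncnt m n z := by
    unfold Ncnt
    exact Fintype.card_congr (Equiv.subtypeEquiv (Equiv.refl _)
      (fun y => by simp [List.cons_sublist_cons]))
  have h2 : ∀ b ∈ Finset.univ.erase a,
      Fintype.card {y : Fin n → Fin m // ¬ (a::z).Sublist (b :: List.ofFn y)} = Ncnt m n (a::z) := by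
    intro b hb
    unfold Ncnt
    exact Fintype.card_congr (Equiv.subtypeEquiv (Equiv.refl _)
      (fun y => by simp [sublist_cons_ne (Finset.ne_of_mem_erase hb)]))
  rw [h1, Finset.sum_congr rfl h2, Finset.sum_const,
    Finset.card_erase_of_mem (Finset.mem_univ a)]
  simp [Finset.card_univ, mul_comm]

theorem Ncnt_eq_Tcnt (m : ℕ) : ∀ (n : ℕ) (z : List (Fin m)), Ncnt m n z = Tcnt m n z.length := by
  intro n
  induction n with
  | zero =>
    intro z
    rw [Ncnt_zero]
    cases z with
    | nil => simp [Tcnt]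
    | cons a z' =>
      simp only [List.length_cons, if_neg (List.cons_ne_nil a z')]
      rw [show Tcnt m 0 (z'.length + 1) = 1 from ?_]
      unfold Tcnt
      rw [Finset.sum_range_succ']
      simp [Nat.choose_eq_zero_iff]
  | succ n ih =>
    intro z
    cases z with
    | nil => rw [Ncnt_nil]; simp [Tcnt]
    | cons a z' =>
      rw [Ncnt_succ, Nat.add_sub_cancel, ih z', ih (a::z')]
      rw [List.length_cons]
      exact (Tcnt_succ m n z'.length).symm

section analysis
variable (m : ℕ) (hm : 2 ≤ m) (ν : ℝ) (hν0 : 0 < ν) (hν1 : ν < 1 / m)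

-- abbreviation for KL divergence expression
noncomputable def Dexpr (m : ℕ) (ν : ℝ) : ℝ :=
  Real.log m + ν * Real.log ν + (1-ν) * Real.log (1-ν) - (1-ν) * Real.log ((m:ℝ)-1)

include hm hν0 hν1 in
theorem base_facts : (2:ℝ) ≤ (m:ℝ) ∧ ν < 1/2 ∧ ν * m < 1 := by
  have h2 : (2:ℝ) ≤ (m:ℝ) := by exact_mod_cast hm
  have hmpos : (0:ℝ) < m := by linarith
  have hνm : ν * m < 1 := by
    have h := mul_lt_mul_of_pos_right hν1 hmpos
    rwa [one_div, inv_mul_cancel₀ (ne_of_gt hmpos)] at h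
  refine ⟨h2, ?_, hνm⟩
  nlinarith

include hm hν0 hν1 in
theorem Dexpr_pos : 0 < Dexpr m ν := by
  obtain ⟨h2, hν2, hνm⟩ := base_facts m hm ν hν0 hν1
  have hmpos : (0:ℝ) < m := by linarith
  have h1ν : 0 < 1 - ν := by linarith
  have hm1 : (0:ℝ) < (m:ℝ) - 1 := by linarith
  -- Dexpr = ν * log(ν*m) + (1-ν) * log((1-ν)*m/(m-1))
  have hrw : Dexpr m ν = ν * Real.log (ν*m) + (1-ν) * Real.log ((1-ν)*m/((m:ℝ)-1)) := by
    unfold Dexpr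
    rw [Real.log_mul (by positivity) (by positivity),
      Real.log_div (by positivity) (by positivity),
      Real.log_mul (by positivity) (by positivity)]
    ring
  rw [hrw]
  -- log x > 1 - 1/x  (strict for x ≠ 1)
  have key1 : 1 - 1/(ν*m) < Real.log (ν*m) := by
    have h := Real.log_lt_sub_one_of_pos (x := 1/(ν*m)) (by positivity) (by
      intro hc
      rw [div_eq_one_iff_eq (by positivity)] at hc
      exact absurd hc.symm (ne_of_lt hνm))
    rw [Real.log_div one_ne_zero (by positivity), Real.log_one] at h
    linarith
  have key2 : 1 - ((m:ℝ)-1)/((1-ν)*m) ≤ Real.log ((1-ν)*m/((m:ℝ)-1)) := by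
    have h := Real.log_le_sub_one_of_pos (x := ((m:ℝ)-1)/((1-ν)*m)) (by positivity)
    rw [Real.log_div (by positivity) (by positivity)] at h
    rw [Real.log_div (by positivity) (by positivity)]
    linarith
  have e1 : ν * (1 - 1/(ν*m)) + (1-ν) * (1 - ((m:ℝ)-1)/((1-ν)*m)) = 0 := by
    field_simp
    ring
  nlinarith [key1, key2]

include hm hν0 hν1 in
theorem C_eq : ν * Real.log ((m : ℝ) * ((m : ℝ) - 1) ^ (ν - 1) * ν ^ ν / (1 - ν) ^ (ν - 1))
    = ν * Dexpr m ν := by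
  obtain ⟨h2, hν2, hνm⟩ := base_facts m hm ν hν0 hν1
  have hmpos : (0:ℝ) < m := by linarith
  have h1ν : 0 < 1 - ν := by linarith
  have hm1 : (0:ℝ) < (m:ℝ) - 1 := by linarith
  have : Real.log ((m : ℝ) * ((m : ℝ) - 1) ^ (ν - 1) * ν ^ ν / (1 - ν) ^ (ν - 1))
      = Real.log m + (ν-1) * Real.log ((m:ℝ)-1) + ν * Real.log ν - (ν-1) * Real.log (1-ν) := by
    rw [Real.log_div (by positivity) (by positivity),
      Real.log_mul (by positivity) (by positivity),
      Real.log_mul (by positivity) (by positivity),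
      Real.log_rpow hm1, Real.log_rpow hν0, Real.log_rpow h1ν]
  rw [this]
  unfold Dexpr
  ring

include hm hν0 hν1 in
theorem tail_bound (n k : ℕ) (hn : 1 ≤ n) (hk : (k:ℝ) ≤ ν * n) :
    (Tcnt m n k : ℝ) ≤ (m:ℝ)^n * Real.exp (-(ν * Dexpr m ν) * n) := by
  obtain ⟨h2, hν2, hνm⟩ := base_facts m hm ν hν0 hν1
  have hmpos : (0:ℝ) < m := by linarith
  have h1ν : 0 < 1 - ν := by linarith
  have hm1 : (0:ℝ) < (m:ℝ) - 1 := by linarith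
  have hD : 0 < Dexpr m ν := Dexpr_pos m hm ν hν0 hν1
  set L : ℝ := ν * ((m:ℝ)-1) / (1-ν) with hLdef
  have hL0 : 0 < L := by positivity
  have hL1 : L < 1 := by
    rw [hLdef, div_lt_one h1ν]
    nlinarith
  have hlogL : Real.log L = Real.log ν + Real.log ((m:ℝ)-1) - Real.log (1-ν) := by
    rw [hLdef, Real.log_div (by positivity) (by positivity),
      Real.log_mul (by positivity) (by positivity)]
  have hlogLneg : Real.log L < 0 := Real.log_neg hL0 hL1
  have hkn : k ≤ n := by
    by_contra hc
    push_neg at hc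
    have : (n:ℝ) < k := by exact_mod_cast hc
    nlinarith
  have hcast : ((m-1:ℕ):ℝ) = (m:ℝ) - 1 := by
    have : 1 ≤ m := by omega
    push_cast [this]
    ring
  -- Step 1: cast
  have step1 : (Tcnt m n k : ℝ) = ∑ i ∈ range k, (n.choose i : ℝ) * ((m:ℝ)-1)^(n-i) := by
    unfold Tcnt
    push_cast [hcast]
    ring_nf
  -- Step 2: insert lambda powers
  have step2 : (Tcnt m n k : ℝ) ≤ L^((1:ℝ) - k) * ∑ i ∈ range k, L^i * ((n.choose i : ℝ) * ((m:ℝ)-1)^(n-i)) := by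
    rw [step1, Finset.mul_sum]
    apply Finset.sum_le_sum
    intro i hi
    have hik : i < k := Finset.mem_range.mp hi
    have hone : (1:ℝ) ≤ L^((1:ℝ)-k) * L^i := by
      rw [← Real.rpow_natCast L i, ← Real.rpow_add hL0]
      apply Real.one_le_rpow_of_pos_of_le_one_of_nonpos hL0 hL1.le
      have : (i:ℝ) ≤ (k:ℝ) - 1 := by
        have : (i:ℝ) + 1 ≤ k := by exact_mod_cast hik
        linarith
      linarith
    have hterm : (0:ℝ) ≤ (n.choose i : ℝ) * ((m:ℝ)-1)^(n-i) := by positivity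
    calc (n.choose i : ℝ) * ((m:ℝ)-1)^(n-i)
        = 1 * ((n.choose i : ℝ) * ((m:ℝ)-1)^(n-i)) := by ring
      _ ≤ (L^((1:ℝ)-k) * L^i) * ((n.choose i : ℝ) * ((m:ℝ)-1)^(n-i)) :=
          mul_le_mul_of_nonneg_right hone hterm
      _ = L^((1:ℝ)-k) * (L^i * ((n.choose i : ℝ) * ((m:ℝ)-1)^(n-i))) := by ring
  -- Step 3: binomial theorem
  have step3 : ∑ i ∈ range k, L^i * ((n.choose i : ℝ) * ((m:ℝ)-1)^(n-i))
      ≤ (((m:ℝ)-1)/(1-ν))^n := by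
    have hext : ∑ i ∈ range k, L^i * ((n.choose i : ℝ) * ((m:ℝ)-1)^(n-i))
        ≤ ∑ i ∈ range (n+1), L^i * ((n.choose i : ℝ) * ((m:ℝ)-1)^(n-i)) := by
      apply Finset.sum_le_sum_of_subset_of_nonneg
      · apply Finset.range_subset_range.mpr; omega
      · intro i _ _; positivity
    have hbin : ∑ i ∈ range (n+1), L^i * ((n.choose i : ℝ) * ((m:ℝ)-1)^(n-i))
        = (L + ((m:ℝ)-1))^n := by
      rw [add_pow]
      apply Finset.sum_congr rfl
      intro i _
      ring
    have hLeq : L + ((m:ℝ)-1) = ((m:ℝ)-1)/(1-ν) := by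
      rw [hLdef]
      field_simp
      ring
    rw [hbin, hLeq] at hext
    exact hext
  -- Step 4: log comparison
  have step4 : L^((1:ℝ) - k) * (((m:ℝ)-1)/(1-ν))^n ≤ (m:ℝ)^n * Real.exp (-(ν * Dexpr m ν) * n) := by
    have hq : (0:ℝ) < ((m:ℝ)-1)/(1-ν) := by positivity
    have lhs_eq : L^((1:ℝ) - k) * (((m:ℝ)-1)/(1-ν))^n
        = Real.exp (Real.log L * ((1:ℝ)-k) + n * Real.log (((m:ℝ)-1)/(1-ν))) := by
      rw [Real.exp_add, Real.rpow_def_of_pos hL0]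
      congr 1
      rw [← Real.log_pow, Real.exp_log (pow_pos hq n)]
    have rhs_eq : (m:ℝ)^n * Real.exp (-(ν * Dexpr m ν) * n)
        = Real.exp ((n:ℝ) * Real.log m + (-(ν * Dexpr m ν) * n)) := by
      rw [Real.exp_add]
      congr 1
      rw [← Real.log_pow, Real.exp_log (pow_pos hmpos n)]
    rw [lhs_eq, rhs_eq]
    apply Real.exp_le_exp.mpr
    have e1 : Real.log L * ((1:ℝ)-k) ≤ Real.log L * (1 - ν*n) := by
      apply mul_le_mul_of_nonpos_left _ hlogLneg.le
      linarith
    have e2 : Real.log L * (1 - ν*n) ≤ -(ν*n)*Real.log L := by nlinarith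
    have e3 : -(ν*(n:ℝ))*Real.log L + n * Real.log (((m:ℝ)-1)/(1-ν))
        - ((n:ℝ) * Real.log m + (-(ν * Dexpr m ν) * n)) = -((n:ℝ)*(1-ν)*Dexpr m ν) := by
      rw [hlogL, Real.log_div (by positivity) (by positivity)]
      unfold Dexpr
      ring
    have e4 : (0:ℝ) ≤ (n:ℝ)*(1-ν)*Dexpr m ν := by positivity
    linarith
  calc (Tcnt m n k : ℝ) ≤ L^((1:ℝ) - k) * ∑ i ∈ range k, L^i * ((n.choose i : ℝ) * ((m:ℝ)-1)^(n-i)) := step2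
    _ ≤ L^((1:ℝ) - k) * (((m:ℝ)-1)/(1-ν))^n := by
        apply mul_le_mul_of_nonneg_left step3 (by positivity)
    _ ≤ (m:ℝ)^n * Real.exp (-(ν * Dexpr m ν) * n) := step4

end analysis
theorem atom_measure {Ω : Type*} [MeasurableSpace Ω] (μ : Measure Ω)
    (m n k : ℕ) (Y Z : ℕ → Ω → Fin m)
    (hindep : iIndepFun (Sum.elim Y Z) μ)
    (hY : ∀ i (a : Fin m), μ {ω | Y i ω = a} = ((m : ℝ≥0∞))⁻¹)
    (hZ : ∀ i (a : Fin m), μ {ω | Z i ω = a} = ((m : ℝ≥0∞))⁻¹)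
    (q : (Fin n → Fin m) × (Fin k → Fin m)) :
    μ {ω | (∀ i : Fin n, Y i ω = q.1 i) ∧ (∀ j : Fin k, Z j ω = q.2 j)}
      = ((m : ℝ≥0∞))⁻¹ ^ (n + k) := by
  classical
  set S : Finset (ℕ ⊕ ℕ) := (range n).disjSum (range k) with hS
  set sets : ℕ ⊕ ℕ → Set (Fin m) :=
    Sum.elim (fun i => if h : i < n then ({q.1 ⟨i, h⟩} : Set (Fin m)) else Set.univ)
      (fun j => if h : j < k then ({q.2 ⟨j, h⟩} : Set (Fin m)) else Set.univ) with hsets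
  have hmeas : ∀ s ∈ S, MeasurableSet (sets s) := fun s _ => trivial
  have heq : {ω | (∀ i : Fin n, Y i ω = q.1 i) ∧ (∀ j : Fin k, Z j ω = q.2 j)}
      = ⋂ s ∈ S, Sum.elim Y Z s ⁻¹' sets s := by
    ext ω
    simp only [Set.mem_setOf_eq, Set.mem_iInter]
    constructor
    · rintro ⟨h1, h2⟩ s hs
      rcases s with i | j
      · have hi : i < n := by simpa [hS] using hs
        simp only [hsets, Sum.elim_inl, Set.mem_preimage, dif_pos hi, Set.mem_singleton_iff]
        exact h1 ⟨i, hi⟩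
      · have hj : j < k := by simpa [hS] using hs
        simp only [hsets, Sum.elim_inr, Set.mem_preimage, dif_pos hj, Set.mem_singleton_iff]
        exact h2 ⟨j, hj⟩
    · intro h
      constructor
      · intro i
        have := h (Sum.inl i) (by simp [hS, i.isLt])
        simpa [hsets, dif_pos i.isLt] using this
      · intro j
        have := h (Sum.inr j) (by simp [hS, j.isLt])
        simpa [hsets, dif_pos j.isLt] using this
  rw [heq, (iIndepFun_iff_measure_inter_preimage_eq_mul.mp hindep) S hmeas, hS,
    Finset.prod_disjSum]
  have hY' : ∀ i ∈ range n, μ (Sum.elim Y Z (Sum.inl i) ⁻¹' sets (Sum.inl i)) = ((m : ℝ≥0∞))⁻¹ := by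
    intro i hi
    have hi' : i < n := mem_range.mp hi
    have : Sum.elim Y Z (Sum.inl i) ⁻¹' sets (Sum.inl i) = {ω | Y i ω = q.1 ⟨i, hi'⟩} := by
      ext ω; simp [hsets, dif_pos hi']
    rw [this, hY]
  have hZ' : ∀ j ∈ range k, μ (Sum.elim Y Z (Sum.inr j) ⁻¹' sets (Sum.inr j)) = ((m : ℝ≥0∞))⁻¹ := by
    intro j hj
    have hj' : j < k := mem_range.mp hj
    have : Sum.elim Y Z (Sum.inr j) ⁻¹' sets (Sum.inr j) = {ω | Z j ω = q.2 ⟨j, hj'⟩} := by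
      ext ω; simp [hsets, dif_pos hj']
    rw [this, hZ]
  rw [Finset.prod_congr rfl hY', Finset.prod_congr rfl hZ', Finset.prod_const, Finset.prod_const,
    Finset.card_range, Finset.card_range, ← pow_add]

theorem bad_prob_le {Ω : Type*} [MeasurableSpace Ω] (μ : Measure Ω)
    (m n k : ℕ) (Y Z : ℕ → Ω → Fin m)
    (p : (Fin n → Fin m) → (Fin k → Fin m) → Prop)
    (hatom : ∀ q : (Fin n → Fin m) × (Fin k → Fin m),
      μ {ω | (∀ i : Fin n, Y i ω = q.1 i) ∧ (∀ j : Fin k, Z j ω = q.2 j)}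
        = ((m : ℝ≥0∞))⁻¹ ^ (n + k)) :
    μ {ω | ¬ p (fun i : Fin n => Y i ω) (fun j : Fin k => Z j ω)}
      ≤ (Nat.card {q : (Fin n → Fin m) × (Fin k → Fin m) // ¬ p q.1 q.2} : ℝ≥0∞)
        * ((m : ℝ≥0∞))⁻¹ ^ (n + k) := by
  classical
  set atom : (Fin n → Fin m) × (Fin k → Fin m) → Set Ω :=
    fun q => {ω | (∀ i : Fin n, Y i ω = q.1 i) ∧ (∀ j : Fin k, Z j ω = q.2 j)} with hatomdef
  set Sbad : Finset ((Fin n → Fin m) × (Fin k → Fin m)) :=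
    Finset.univ.filter (fun q => ¬ p q.1 q.2) with hSbad
  have hsub : {ω | ¬ p (fun i : Fin n => Y i ω) (fun j : Fin k => Z j ω)}
      ⊆ ⋃ q ∈ Sbad, atom q := by
    intro ω hω
    refine Set.mem_biUnion (show ((fun i : Fin n => Y i ω), (fun j : Fin k => Z j ω)) ∈ Sbad from ?_) ?_
    · simpa [hSbad] using hω
    · exact ⟨fun i => rfl, fun j => rfl⟩
  calc μ {ω | ¬ p (fun i : Fin n => Y i ω) (fun j : Fin k => Z j ω)}
      ≤ μ (⋃ q ∈ Sbad, atom q) := measure_mono hsub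
    _ ≤ ∑ q ∈ Sbad, μ (atom q) := measure_biUnion_finset_le Sbad atom
    _ = ∑ _q ∈ Sbad, ((m : ℝ≥0∞))⁻¹ ^ (n + k) := Finset.sum_congr rfl (fun q _ => hatom q)
    _ = (Sbad.card : ℝ≥0∞) * ((m : ℝ≥0∞))⁻¹ ^ (n + k) := by
        rw [Finset.sum_const, nsmul_eq_mul]
    _ = (Nat.card {q : (Fin n → Fin m) × (Fin k → Fin m) // ¬ p q.1 q.2} : ℝ≥0∞)
        * ((m : ℝ≥0∞))⁻¹ ^ (n + k) := by
        rw [Nat.card_eq_fintype_card, Fintype.card_subtype]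

theorem bad_card (m n k : ℕ) :
    Nat.card {q : (Fin n → Fin m) × (Fin k → Fin m) //
      ¬ (List.ofFn q.2).Sublist (List.ofFn q.1)} = m ^ k * Tcnt m n k := by
  classical
  rw [Nat.card_eq_fintype_card]
  have e : {q : (Fin n → Fin m) × (Fin k → Fin m) // ¬ (List.ofFn q.2).Sublist (List.ofFn q.1)}
      ≃ Σ z : Fin k → Fin m, {y : Fin n → Fin m // ¬ (List.ofFn z).Sublist (List.ofFn y)} :=
    calc {q : (Fin n → Fin m) × (Fin k → Fin m) // ¬ (List.ofFn q.2).Sublist (List.ofFn q.1)}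
        ≃ {q : (Fin k → Fin m) × (Fin n → Fin m) // ¬ (List.ofFn q.1).Sublist (List.ofFn q.2)} :=
          (Equiv.subtypeEquiv (Equiv.prodComm _ _) (fun q => Iff.rfl))
      _ ≃ Σ z : Fin k → Fin m, {y : Fin n → Fin m // ¬ (List.ofFn z).Sublist (List.ofFn y)} :=
          Equiv.subtypeProdEquivSigmaSubtype (fun z y => ¬ (List.ofFn z).Sublist (List.ofFn y))
  rw [Fintype.card_congr e, Fintype.card_sigma]
  have : ∀ z : Fin k → Fin m,
      Fintype.card {y : Fin n → Fin m // ¬ (List.ofFn z).Sublist (List.ofFn y)} = Tcnt m n k := by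
    intro z
    have h := Ncnt_eq_Tcnt m n (List.ofFn z)
    rwa [Ncnt, List.length_ofFn] at h
  rw [Finset.sum_congr rfl (fun z _ => this z), Finset.sum_const, Finset.card_univ, smul_eq_mul]
  congr 1
  simp

end helpers

theorem stmt_6 {Ω : Type*} [MeasurableSpace Ω] (μ : Measure Ω) [IsProbabilityMeasure μ]
    (m : ℕ) (hm : 2 ≤ m) (ν : ℝ) (hν0 : 0 < ν) (hν1 : ν < 1 / m)
    (Y Z : ℕ → Ω → Fin m)
    (hYmeas : ∀ i, Measurable (Y i)) (hZmeas : ∀ i, Measurable (Z i))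
    (hindep : iIndepFun (Sum.elim Y Z) μ)
    (hY : ∀ i (a : Fin m), μ {ω | Y i ω = a} = ((m : ℝ≥0∞))⁻¹)
    (hZ : ∀ i (a : Fin m), μ {ω | Z i ω = a} = ((m : ℝ≥0∞))⁻¹) :
    0 < ν * Real.log ((m : ℝ) * ((m : ℝ) - 1) ^ (ν - 1) * ν ^ ν / (1 - ν) ^ (ν - 1)) ∧
    ∀ n : ℕ, 1 ≤ n →
      1 - Real.exp
          (-(ν * Real.log ((m : ℝ) * ((m : ℝ) - 1) ^ (ν - 1) * ν ^ ν /
            (1 - ν) ^ (ν - 1))) * n) ≤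
        (μ {ω | lcsLength (List.ofFn fun i : Fin ⌊ν * n⌋₊ => Z i ω)
            (List.ofFn fun i : Fin n => Y i ω) = ⌊ν * n⌋₊}).toReal := by
  classical
  have hC := C_eq m hm ν hν0 hν1
  have hD := Dexpr_pos m hm ν hν0 hν1
  constructor
  · rw [hC]; exact mul_pos hν0 hD
  · intro n hn
    rw [hC]
    set k := ⌊ν * (n : ℝ)⌋₊ with hkdef
    set E := {ω | lcsLength (List.ofFn fun i : Fin k => Z i ω)
        (List.ofFn fun i : Fin n => Y i ω) = k} with hEdef
    have hmpos : (0:ℝ) < m := by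
      have : (2:ℝ) ≤ m := by exact_mod_cast hm
      linarith
    -- measurability of E
    have hEmeas : MeasurableSet E := by
      have hVmeas : Measurable (fun ω => ((fun i : Fin n => Y i ω), (fun j : Fin k => Z j ω)) :
          Ω → (Fin n → Fin m) × (Fin k → Fin m)) :=
        (measurable_pi_lambda (fun ω (i : Fin n) => Y i ω) (fun i => hYmeas i)).prodMk
          (measurable_pi_lambda (fun ω (j : Fin k) => Z j ω) (fun j => hZmeas j))
      have : E = (fun ω => ((fun i : Fin n => Y i ω), (fun j : Fin k => Z j ω)))
          ⁻¹' {q : (Fin n → Fin m) × (Fin k → Fin m) |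
            lcsLength (List.ofFn q.2) (List.ofFn q.1) = k} := rfl
      rw [this]
      exact hVmeas (Set.toFinite _).measurableSet
    have hcompl : μ E = 1 - μ Eᶜ := by
      rw [measure_compl hEmeas (measure_ne_top μ _), measure_univ,
        ENNReal.sub_sub_cancel ENNReal.one_ne_top prob_le_one]
    -- bound on the complement
    have hbadprob := bad_prob_le μ m n k Y Z
      (fun yv zv => lcsLength (List.ofFn zv) (List.ofFn yv) = k)
      (atom_measure μ m n k Y Z hindep hY hZ)
    have hEc : Eᶜ = {ω | ¬ (fun yv zv => lcsLength (List.ofFn zv) (List.ofFn yv) = k)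
        (fun i : Fin n => Y i ω) (fun j : Fin k => Z j ω)} := by
      rw [hEdef, ← Set.compl_setOf]
    have hcards : Nat.card {q : (Fin n → Fin m) × (Fin k → Fin m) //
        ¬ (fun yv zv => lcsLength (List.ofFn zv) (List.ofFn yv) = k) q.1 q.2}
        = m ^ k * Tcnt m n k := by
      rw [← bad_card m n k]
      apply Nat.card_congr
      apply Equiv.subtypeEquiv (Equiv.refl _)
      intro q
      simp only [Equiv.refl_apply, not_iff_not]
      have h := lcs_eq_iff (List.ofFn q.2) (List.ofFn q.1)
      rw [List.length_ofFn] at h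
      exact h
    have hEcbound : μ Eᶜ ≤ ((m ^ k * Tcnt m n k : ℕ) : ℝ≥0∞) * ((m : ℝ≥0∞))⁻¹ ^ (n + k) := by
      rw [hEc]
      calc μ _ ≤ _ := hbadprob
        _ = ((m ^ k * Tcnt m n k : ℕ) : ℝ≥0∞) * ((m : ℝ≥0∞))⁻¹ ^ (n + k) := by rw [hcards]
    -- real arithmetic
    have hkν : (k : ℝ) ≤ ν * n := by
      rw [hkdef]; exact Nat.floor_le (by positivity)
    have htail := tail_bound m hm ν hν0 hν1 n k hn hkν
    have hfin : ((m ^ k * Tcnt m n k : ℕ) : ℝ≥0∞) * ((m : ℝ≥0∞))⁻¹ ^ (n + k) ≠ ⊤ := by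
      apply ENNReal.mul_ne_top (ENNReal.natCast_ne_top _)
      apply ENNReal.pow_ne_top
      rw [ENNReal.inv_ne_top]
      exact_mod_cast (by omega : m ≠ 0)
    have h2 : (μ Eᶜ).toReal ≤ Real.exp (-(ν * Dexpr m ν) * n) := by
      refine le_trans (ENNReal.toReal_mono hfin hEcbound) ?_
      rw [ENNReal.toReal_mul, ENNReal.toReal_pow, ENNReal.toReal_inv, ENNReal.toReal_natCast,
        ENNReal.toReal_natCast]
      push_cast
      calc (m:ℝ) ^ k * (Tcnt m n k : ℝ) * ((m:ℝ)⁻¹) ^ (n + k)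
          ≤ (m:ℝ) ^ k * ((m:ℝ) ^ n * Real.exp (-(ν * Dexpr m ν) * n)) * ((m:ℝ)⁻¹) ^ (n + k) := by
            apply mul_le_mul_of_nonneg_right
              (mul_le_mul_of_nonneg_left htail (by positivity)) (by positivity)
        _ = Real.exp (-(ν * Dexpr m ν) * n) := by
            rw [inv_pow, pow_add]
            field_simp
    rw [hcompl, ENNReal.toReal_sub_of_le prob_le_one ENNReal.one_ne_top, ENNReal.toReal_one]
    linarith [h2]
end

section
/- For every real δ with 0 < δ < (m−1)/m and every integer ℓ ≥ 1, P( L_ℓ( ⌊mℓ(1−δ)⌋ ) = ℓ ) ≤ e^{−C_2·δ²·ℓ}, where C_2 = m/(2(m−1)); that is, the probability that Y^{(ℓ)} is a subsequence of an independent word of ⌊mℓ(1−δ)⌋ i.i.d. uniform letters is at most e^{−C_2 δ² ℓ}. -/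
open MeasureTheory ProbabilityTheory List
open scoped ENNReal

section AuxLemmas

lemma strictMono_fin_apply_eq {n : ℕ} {f : Fin n → Fin n} (hf : StrictMono f) (i : Fin n) :
    f i = i := by
  have hwf : WellFoundedLT (Fin n) := inferInstance
  have hle : i ≤ f i := @StrictMono.le_apply (Fin n) (by infer_instance) hwf f hf i
  refine le_antisymm ?_ hle
  have hrev : StrictMono fun j : Fin n => (f j.rev).rev := by
    intro a b hab
    exact Fin.rev_lt_rev.mpr (hf (Fin.rev_lt_rev.mpr hab))
  have h2 : i.rev ≤ (f i.rev.rev).rev := @StrictMono.le_apply (Fin n) (by infer_instance) hwf _ hrev i.rev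
  rw [Fin.rev_rev] at h2
  exact Fin.rev_le_rev.mp h2

lemma sublist_of_lcs {α : Type*} {z y : List α} (h : lcsLength z y = y.length) :
    y <+ z := by
  have hne : {r | ∃ π η, IsMatchPair z y r π η}.Nonempty := by
    refine ⟨0, fun i => i.elim0, fun i => i.elim0, ?_, ?_, ?_⟩
    · intro a b _
      exact a.elim0
    · intro a b _
      exact a.elim0
    · intro i
      exact i.elim0
  have hbdd : BddAbove {r | ∃ π η, IsMatchPair z y r π η} := by
    refine ⟨y.length, fun r hr => ?_⟩
    obtain ⟨π, η, hπ, hη, hmatch⟩ := hr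
    simpa using Fintype.card_le_of_injective η hη.injective
  have hmem := Nat.sSup_mem hne hbdd
  rw [show sSup {r | ∃ π η, IsMatchPair z y r π η} = lcsLength z y from rfl, h] at hmem
  obtain ⟨π, η, hπ, hη, hmatch⟩ := hmem
  rw [List.sublist_iff_exists_fin_orderEmbedding_get_eq]
  refine ⟨OrderEmbedding.ofStrictMono π hπ, fun ix => ?_⟩
  have := hmatch ix
  rw [strictMono_fin_apply_eq hη ix] at this
  exact this.symm

lemma count_bound {m : ℕ} (hm : 2 ≤ m) {t : ℝ} (ht : 1 ≤ t) :
    ∀ (k : ℕ) (y : List (Fin m)),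
      ((Finset.univ.filter fun z : Fin k → Fin m => y <+ List.ofFn z).card : ℝ) * t ^ y.length
        ≤ (t + m - 1) ^ k := by
  have hm1 : (1:ℝ) ≤ (m:ℝ) := by exact_mod_cast Nat.one_le_of_lt hm
  have ht0 : (0:ℝ) < t := lt_of_lt_of_le one_pos ht
  have hR : (m:ℝ) ≤ t + m - 1 := by linarith
  have hR0 : (0:ℝ) < t + m - 1 := by linarith
  intro k
  induction k with
  | zero =>
    intro y
    cases y with
    | nil => simp
    | cons b y' =>
      have he : (Finset.univ.filter fun z : Fin 0 → Fin m => (b::y') <+ List.ofFn z).card = 0 := by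
        rw [Finset.card_eq_zero, Finset.filter_eq_empty_iff]
        intro z _
        simp
      rw [he]
      simp only [Nat.cast_zero, zero_mul, pow_zero]
      exact zero_le_one
  | succ k ih =>
    intro y
    cases y with
    | nil =>
      calc ((Finset.univ.filter fun z : Fin (k+1) → Fin m => ([]:List (Fin m)) <+ List.ofFn z).card : ℝ)
            * t ^ (List.length ([]:List (Fin m)))
          ≤ (Fintype.card (Fin (k+1) → Fin m) : ℝ) := by
            simp only [List.length_nil, pow_zero, mul_one]
            exact_mod_cast Finset.card_filter_le _ _
        _ = ((m:ℝ)) ^ (k+1) := by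
            rw [Fintype.card_fun]
            simp
        _ ≤ (t + m - 1) ^ (k+1) := pow_le_pow_left₀ (by positivity) hR _
    | cons b y' =>
      set A : ℝ := ((Finset.univ.filter fun w : Fin k → Fin m => y' <+ List.ofFn w).card : ℝ) with hA
      set B : ℝ := ((Finset.univ.filter fun w : Fin k → Fin m => (b::y') <+ List.ofFn w).card : ℝ) with hB
      have hsum : ((Finset.univ.filter fun z : Fin (k+1) → Fin m => (b::y') <+ List.ofFn z).card : ℝ)
          = A + ((m:ℝ) - 1) * B := by
        rw [← Finset.sum_boole]
        rw [← Fintype.sum_equiv (Fin.consEquiv (fun _ : Fin (k+1) => Fin m))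
          (fun p : Fin m × (Fin k → Fin m) =>
            if (b::y') <+ List.ofFn (Fin.cons p.1 p.2 : Fin (k+1) → Fin m) then (1:ℝ) else 0)
          _ (fun p => rfl)]
        have hofn : ∀ (a : Fin m) (w : Fin k → Fin m),
            List.ofFn (Fin.cons a w : Fin (k+1) → Fin m) = a :: List.ofFn w := by
          intro a w
          rw [List.ofFn_succ]
          simp
        have inner : ∀ a : Fin m,
            (∑ w : Fin k → Fin m, if (b::y') <+ List.ofFn (Fin.cons a w : Fin (k+1) → Fin m) then (1:ℝ) else 0)
            = if a = b then A else B := by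
          intro a
          by_cases hab : a = b
          · subst hab
            rw [if_pos rfl, hA, ← Finset.sum_boole]
            apply Finset.sum_congr rfl
            intro w _
            rw [hofn]
            congr 1
            simp [List.cons_sublist_cons]
          · rw [if_neg hab, hB, ← Finset.sum_boole]
            apply Finset.sum_congr rfl
            intro w _
            rw [hofn]
            congr 1
            simp only [eq_iff_iff]
            constructor
            · intro h
              rcases List.cons_sublist_cons'.mp h with h' | ⟨heq, h'⟩
              · exact h'
              · exact absurd heq.symm hab
            · intro h
              exact h.cons a
        rw [Fintype.sum_prod_type]
        simp only [inner]
        have split : ∀ a : Fin m, (if a = b then A else B) = B + (if a = b then A - B else 0) := by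
          intro a; by_cases hab : a = b <;> simp [hab]
        simp only [split]
        rw [Finset.sum_add_distrib, Finset.sum_const, Finset.sum_ite_eq' Finset.univ b (fun _ => A - B)]
        simp [Fintype.card_fin]
        ring
      rw [hsum, List.length_cons]
      have hAle := ih y'
      have hBle := ih (b :: y')
      rw [List.length_cons] at hBle
      have hBnn : (0:ℝ) ≤ B := Nat.cast_nonneg _
      have htp : (0:ℝ) < t ^ y'.length := pow_pos ht0 _
      calc (A + ((m:ℝ)-1) * B) * t ^ (y'.length + 1)
          = A * t ^ y'.length * t + ((m:ℝ)-1) * (B * t ^ (y'.length + 1)) := by ring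
        _ ≤ (t + m - 1)^k * t + ((m:ℝ)-1) * ((t + m - 1)^k) := by
            apply add_le_add
            · exact mul_le_mul_of_nonneg_right hAle (le_of_lt ht0)
            · exact mul_le_mul_of_nonneg_left hBle (by linarith)
        _ = (t + m - 1) ^ (k+1) := by rw [pow_succ]; ring

lemma psi_deriv (m : ℝ) (c : ℝ) (x : ℝ) (hx1 : x < 1) (hu : 1 < m * (1-x)) :
    HasDerivAt (fun x : ℝ => (Real.log (m-1) - Real.log (m*(1-x)-1))
      - m*(1-x)*(Real.log (m-1) + Real.log (1-x) - Real.log (m*(1-x)-1)) - c*x^2)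
      (m * (Real.log (m-1) + Real.log (1-x) - Real.log (m*(1-x)-1)) - 2*c*x) x := by
  have h1x : (0:ℝ) < 1 - x := by linarith
  have hu0 : (0:ℝ) < m * (1-x) - 1 := by linarith
  have hone : HasDerivAt (fun x : ℝ => 1 - x) (-1) x := by
    have h := (hasDerivAt_const x (1:ℝ)).sub (hasDerivAt_id x)
    simp only [zero_sub] at h
    exact h
  have hu' : HasDerivAt (fun x : ℝ => m * (1-x) - 1) (m * (-1)) x :=
    (hone.const_mul m).sub_const 1
  have hlogu : HasDerivAt (fun x : ℝ => Real.log (m*(1-x)-1)) (m * (-1) / (m*(1-x)-1)) x :=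
    hu'.log (ne_of_gt hu0)
  have hlog1x : HasDerivAt (fun x : ℝ => Real.log (1-x)) ((-1) / (1-x)) x :=
    hone.log (ne_of_gt h1x)
  have hL : HasDerivAt (fun x : ℝ => Real.log (m-1) + Real.log (1-x) - Real.log (m*(1-x)-1))
      ((-1)/(1-x) - m*(-1)/(m*(1-x)-1)) x := by
    have h := ((hasDerivAt_const x (Real.log (m-1))).add hlog1x).sub hlogu
    simp only [zero_add] at h
    exact h
  have hmul : HasDerivAt (fun x : ℝ => m*(1-x)*(Real.log (m-1) + Real.log (1-x) - Real.log (m*(1-x)-1)))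
      ((m * (-1)) * (Real.log (m-1) + Real.log (1-x) - Real.log (m*(1-x)-1))
        + m*(1-x) * ((-1)/(1-x) - m*(-1)/(m*(1-x)-1))) x :=
    (hone.const_mul m).mul hL
  have hsq : HasDerivAt (fun x : ℝ => c * x^2) (c * (2*x)) x := by
    have := (hasDerivAt_pow 2 x).const_mul c
    simpa using this
  have htot := (((hasDerivAt_const x (Real.log (m-1))).sub hlogu).sub hmul).sub hsq
  refine htot.congr_deriv ?_
  field_simp [ne_of_gt h1x, ne_of_gt hu0]
  ring

lemma key_ineq (m : ℝ) (hm : 2 ≤ m) (δ : ℝ) (hδ0 : 0 < δ) (hδ1 : δ < (m-1)/m) :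
    m/(2*(m-1)) * δ^2 ≤ Real.log ((m-1)/(m*(1-δ)-1))
      - m*(1-δ) * Real.log ((m-1)*(1-δ)/(m*(1-δ)-1)) := by
  have hm0 : (0:ℝ) < m := by linarith
  have hm1 : (0:ℝ) < m - 1 := by linarith
  set c : ℝ := m/(2*(m-1)) with hc
  set F : ℝ → ℝ := fun x => (Real.log (m-1) - Real.log (m*(1-x)-1))
      - m*(1-x)*(Real.log (m-1) + Real.log (1-x) - Real.log (m*(1-x)-1)) - c*x^2 with hF
  have hδ1' : δ < 1 := lt_of_lt_of_le hδ1 (by rw [div_le_one hm0]; linarith)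
  have hfacts : ∀ x ∈ Set.Icc (0:ℝ) δ, x < 1 ∧ 1 < m * (1-x) := by
    rintro x ⟨hx0, hxδ⟩
    constructor
    · linarith
    · have h1 : δ * m < m - 1 := (lt_div_iff₀ hm0).mp hδ1
      nlinarith
  have hderiv_nonneg : ∀ x ∈ Set.Ioo (0:ℝ) δ, 0 ≤ m * (Real.log (m-1) + Real.log (1-x) - Real.log (m*(1-x)-1)) - 2*c*x := by
    rintro x ⟨hx0, hxδ⟩
    obtain ⟨hx1, hu⟩ := hfacts x ⟨le_of_lt hx0, le_of_lt hxδ⟩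
    have h1x : (0:ℝ) < 1 - x := by linarith
    have hu0 : (0:ℝ) < m * (1-x) - 1 := by linarith
    have hcomb : Real.log (m-1) + Real.log (1-x) - Real.log (m*(1-x)-1)
        = Real.log ((m-1)*(1-x)/(m*(1-x)-1)) := by
      rw [Real.log_div (by positivity) (ne_of_gt hu0), Real.log_mul (ne_of_gt hm1) (ne_of_gt h1x)]
    have hApos : (0:ℝ) < (m-1)*(1-x)/(m*(1-x)-1) := by positivity
    have hlogA : 1 - ((m-1)*(1-x)/(m*(1-x)-1))⁻¹ ≤ Real.log ((m-1)*(1-x)/(m*(1-x)-1)) :=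
      Real.one_sub_inv_le_log_of_pos hApos
    have hinv : ((m-1)*(1-x)/(m*(1-x)-1))⁻¹ = (m*(1-x)-1)/((m-1)*(1-x)) := by
      rw [inv_div]
    have heq : 1 - (m*(1-x)-1)/((m-1)*(1-x)) = x/((m-1)*(1-x)) := by
      field_simp
      ring
    have hmono : x/(m-1) ≤ x/((m-1)*(1-x)) := by
      apply div_le_div_of_nonneg_left (le_of_lt hx0) (by positivity)
      nlinarith
    have h2c : 2*c*x = m * (x/(m-1)) := by
      rw [hc]; field_simp
    rw [hcomb, h2c]
    have : x/(m-1) ≤ Real.log ((m-1)*(1-x)/(m*(1-x)-1)) := by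
      calc x/(m-1) ≤ x/((m-1)*(1-x)) := hmono
        _ = 1 - (m*(1-x)-1)/((m-1)*(1-x)) := heq.symm
        _ = 1 - ((m-1)*(1-x)/(m*(1-x)-1))⁻¹ := by rw [hinv]
        _ ≤ _ := hlogA
    nlinarith
  have hmonoF : MonotoneOn F (Set.Icc 0 δ) := by
    apply monotoneOn_of_deriv_nonneg (convex_Icc 0 δ)
    · intro x hx
      obtain ⟨hx1, hu⟩ := hfacts x hx
      exact (psi_deriv m c x hx1 hu).continuousAt.continuousWithinAt
    · intro x hx
      rw [interior_Icc] at hx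
      obtain ⟨hx1, hu⟩ := hfacts x ⟨le_of_lt hx.1, le_of_lt hx.2⟩
      exact (psi_deriv m c x hx1 hu).differentiableAt.differentiableWithinAt
    · intro x hx
      rw [interior_Icc] at hx
      obtain ⟨hx1, hu⟩ := hfacts x ⟨le_of_lt hx.1, le_of_lt hx.2⟩
      rw [(psi_deriv m c x hx1 hu).deriv]
      exact hderiv_nonneg x hx
  have hF0 : F 0 = 0 := by
    have e1 : m * (1 - (0:ℝ)) - 1 = m - 1 := by ring
    simp [hF, e1, Real.log_one]
  have hle := hmonoF (Set.left_mem_Icc.mpr (le_of_lt hδ0)) (Set.right_mem_Icc.mpr (le_of_lt hδ0)) (le_of_lt hδ0)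
  rw [hF0] at hle
  have h1δ : (0:ℝ) < 1 - δ := by linarith
  have hu0 : (0:ℝ) < m * (1-δ) - 1 := by
    have := (hfacts δ ⟨le_of_lt hδ0, le_refl δ⟩).2
    linarith
  have e2 : Real.log ((m-1)/(m*(1-δ)-1)) = Real.log (m-1) - Real.log (m*(1-δ)-1) :=
    Real.log_div (ne_of_gt hm1) (ne_of_gt hu0)
  have e3 : Real.log ((m-1)*(1-δ)/(m*(1-δ)-1))
      = Real.log (m-1) + Real.log (1-δ) - Real.log (m*(1-δ)-1) := by
    rw [Real.log_div (by positivity) (ne_of_gt hu0), Real.log_mul (ne_of_gt hm1) (ne_of_gt h1δ)]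
  rw [e2, e3]
  simp only [hF] at hle
  linarith

lemma cyl_meas {Ω : Type*} [MeasurableSpace Ω] (μ : Measure Ω) [IsProbabilityMeasure μ]
    (m : ℕ) (Y Z : ℕ → Ω → Fin m)
    (hindep : iIndepFun (Sum.elim Y Z) μ)
    (hY : ∀ i (a : Fin m), μ {ω | Y i ω = a} = ((m : ℝ≥0∞))⁻¹)
    (hZ : ∀ i (a : Fin m), μ {ω | Z i ω = a} = ((m : ℝ≥0∞))⁻¹)
    (l k : ℕ) (y : Fin l → Fin m) (z : Fin k → Fin m) :
    μ {ω | (∀ i : Fin l, Y i ω = y i) ∧ (∀ j : Fin k, Z j ω = z j)}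
      = ((m : ℝ≥0∞))⁻¹ ^ (l + k) := by
  classical
  set S : Finset (ℕ ⊕ ℕ) :=
    ((Finset.range l).map ⟨Sum.inl, Sum.inl_injective⟩)
      ∪ ((Finset.range k).map ⟨Sum.inr, Sum.inr_injective⟩) with hS
  set sets : ℕ ⊕ ℕ → Set (Fin m) := fun e =>
    Sum.elim (fun i => if h : i < l then {y ⟨i, h⟩} else Set.univ)
             (fun j => if h : j < k then {z ⟨j, h⟩} else Set.univ) e with hsets
  have hmeas : ∀ e, e ∈ S → MeasurableSet (sets e) := by
    rintro (i | j) _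
    · simp only [hsets, Sum.elim_inl]
      split
      · exact measurableSet_singleton _
      · exact MeasurableSet.univ
    · simp only [hsets, Sum.elim_inr]
      split
      · exact measurableSet_singleton _
      · exact MeasurableSet.univ
  have key := hindep.measure_inter_preimage_eq_mul S hmeas
  have hset : (⋂ e ∈ S, (Sum.elim Y Z e) ⁻¹' sets e)
      = {ω | (∀ i : Fin l, Y i ω = y i) ∧ (∀ j : Fin k, Z j ω = z j)} := by
    ext ω
    simp only [Set.mem_iInter, Set.mem_preimage, Set.mem_setOf_eq]
    constructor
    · intro h
      constructor
      · intro i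
        have hmem : (Sum.inl i.1 : ℕ ⊕ ℕ) ∈ S := by
          rw [hS]
          apply Finset.mem_union_left
          simp [i.isLt]
        have := h _ hmem
        simpa [hsets, i.isLt] using this
      · intro j
        have hmem : (Sum.inr j.1 : ℕ ⊕ ℕ) ∈ S := by
          rw [hS]
          apply Finset.mem_union_right
          simp [j.isLt]
        have := h _ hmem
        simpa [hsets, j.isLt] using this
    · rintro ⟨h1, h2⟩ e he
      rcases e with i | j
      · rw [hS] at he
        have hi : i < l := by
          rcases Finset.mem_union.mp he with h | h
          · rcases Finset.mem_map.mp h with ⟨a, ha, hae⟩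
            cases hae
            exact Finset.mem_range.mp ha
          · rcases Finset.mem_map.mp h with ⟨a, _, hae⟩
            cases hae
        simp only [hsets, Sum.elim_inl, dif_pos hi]
        exact h1 ⟨i, hi⟩
      · rw [hS] at he
        have hj : j < k := by
          rcases Finset.mem_union.mp he with h | h
          · rcases Finset.mem_map.mp h with ⟨a, _, hae⟩
            cases hae
          · rcases Finset.mem_map.mp h with ⟨a, ha, hae⟩
            cases hae
            exact Finset.mem_range.mp ha
        simp only [hsets, Sum.elim_inr, dif_pos hj]
        exact h2 ⟨j, hj⟩
  rw [hset] at key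
  rw [key, hS]
  have hdisj : Disjoint ((Finset.range l).map ⟨Sum.inl, Sum.inl_injective⟩)
      ((Finset.range k).map (⟨Sum.inr, Sum.inr_injective⟩ : ℕ ↪ ℕ ⊕ ℕ)) := by
    rw [Finset.disjoint_left]
    rintro a ha hb
    rcases Finset.mem_map.mp ha with ⟨i, _, hi⟩
    rcases Finset.mem_map.mp hb with ⟨j, _, hj⟩
    rw [← hi] at hj
    exact Sum.inl_ne_inr hj.symm
  rw [Finset.prod_union hdisj, Finset.prod_map, Finset.prod_map]
  have hprod1 : ∀ i ∈ Finset.range l,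
      μ (Sum.elim Y Z ((⟨Sum.inl, Sum.inl_injective⟩ : ℕ ↪ ℕ ⊕ ℕ) i) ⁻¹' sets ((⟨Sum.inl, Sum.inl_injective⟩ : ℕ ↪ ℕ ⊕ ℕ) i))
        = ((m : ℝ≥0∞))⁻¹ := by
    intro i hi
    have hi' : i < l := Finset.mem_range.mp hi
    have : sets ((⟨Sum.inl, Sum.inl_injective⟩ : ℕ ↪ ℕ ⊕ ℕ) i) = {y ⟨i, hi'⟩} := by simp [hsets, hi']
    rw [this]
    show μ (Y i ⁻¹' {y ⟨i, hi'⟩}) = _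
    have : Y i ⁻¹' {y ⟨i, hi'⟩} = {ω | Y i ω = y ⟨i, hi'⟩} := rfl
    rw [this, hY]
  have hprod2 : ∀ j ∈ Finset.range k,
      μ (Sum.elim Y Z ((⟨Sum.inr, Sum.inr_injective⟩ : ℕ ↪ ℕ ⊕ ℕ) j) ⁻¹' sets ((⟨Sum.inr, Sum.inr_injective⟩ : ℕ ↪ ℕ ⊕ ℕ) j))
        = ((m : ℝ≥0∞))⁻¹ := by
    intro j hj
    have hj' : j < k := Finset.mem_range.mp hj
    have : sets ((⟨Sum.inr, Sum.inr_injective⟩ : ℕ ↪ ℕ ⊕ ℕ) j) = {z ⟨j, hj'⟩} := by simp [hsets, hj']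
    rw [this]
    show μ (Z j ⁻¹' {z ⟨j, hj'⟩}) = _
    have : Z j ⁻¹' {z ⟨j, hj'⟩} = {ω | Z j ω = z ⟨j, hj'⟩} := rfl
    rw [this, hZ]
  rw [Finset.prod_congr rfl hprod1, Finset.prod_congr rfl hprod2,
    Finset.prod_const, Finset.prod_const, Finset.card_range, Finset.card_range, ← pow_add]

end AuxLemmas

/-- For every `0 < δ < (m−1)/m` and every integer `ℓ ≥ 1`,
the probability that `Y⁽ˡ⁾` is a subsequence of an independent word of
`⌊mℓ(1−δ)⌋` i.i.d. uniform letters (i.e. `L_ℓ(⌊mℓ(1−δ)⌋) = ℓ`) is at most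
`e^{−C₂ δ² ℓ}`, where `C₂ = m/(2(m−1))`. -/
theorem stmt_8 {Ω : Type*} [MeasurableSpace Ω] (μ : Measure Ω) [IsProbabilityMeasure μ]
    (m : ℕ) (hm : 2 ≤ m)
    (Y Z : ℕ → Ω → Fin m)
    (hYmeas : ∀ i, Measurable (Y i)) (hZmeas : ∀ i, Measurable (Z i))
    (hindep : iIndepFun (Sum.elim Y Z) μ)
    (hY : ∀ i (a : Fin m), μ {ω | Y i ω = a} = ((m : ℝ≥0∞))⁻¹)
    (hZ : ∀ i (a : Fin m), μ {ω | Z i ω = a} = ((m : ℝ≥0∞))⁻¹) :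
    ∀ δ : ℝ, 0 < δ → δ < ((m : ℝ) - 1) / m → ∀ ℓ : ℕ, 1 ≤ ℓ →
      (μ {ω | lcsLength (List.ofFn fun i : Fin ⌊(m : ℝ) * ℓ * (1 - δ)⌋₊ => Z i ω)
          (List.ofFn fun i : Fin ℓ => Y i ω) = ℓ}).toReal ≤
        Real.exp (-((m : ℝ) / (2 * ((m : ℝ) - 1))) * δ ^ 2 * ℓ) := by
  classical
  intro δ hδ0 hδ1 ℓ hℓ
  have hmR : (2:ℝ) ≤ (m:ℝ) := by exact_mod_cast hm
  set k := ⌊(m : ℝ) * ℓ * (1 - δ)⌋₊ with hkdef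
  have hm1 : (0:ℝ) < (m:ℝ) - 1 := by linarith
  have hm0 : (0:ℝ) < (m:ℝ) := by linarith
  have hδ1' : δ < 1 := lt_of_lt_of_le hδ1 (by rw [div_le_one hm0]; linarith)
  have h1δ : (0:ℝ) < 1 - δ := by linarith
  have hu0 : (0:ℝ) < (m:ℝ)*(1-δ) - 1 := by
    have := (lt_div_iff₀ hm0).mp hδ1
    nlinarith
  set t : ℝ := ((m:ℝ)-1)/((m:ℝ)*(1-δ)-1) with htdef
  have ht0 : (0:ℝ) < t := by positivity
  have ht1 : (1:ℝ) ≤ t := by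
    rw [le_div_iff₀ hu0]
    nlinarith
  set A : ℝ := ((m:ℝ)-1)*(1-δ)/((m:ℝ)*(1-δ)-1) with hAdef
  have hA0 : (0:ℝ) < A := by positivity
  have hA1 : (1:ℝ) ≤ A := by
    rw [le_div_iff₀ hu0]
    nlinarith
  have hAeq : A = (t + (m:ℝ) - 1)/m := by
    rw [htdef, hAdef]
    field_simp
    ring
  set Q : (Fin ℓ → Fin m) × (Fin k → Fin m) → Prop := fun p => List.ofFn p.1 <+ List.ofFn p.2 with hQ
  set Cyl : (Fin ℓ → Fin m) × (Fin k → Fin m) → Set Ω := fun p =>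
    {ω | (∀ i : Fin ℓ, Y i ω = p.1 i) ∧ (∀ j : Fin k, Z j ω = p.2 j)} with hCyl
  have hincl : {ω | lcsLength (List.ofFn fun i : Fin k => Z i ω) (List.ofFn fun i : Fin ℓ => Y i ω) = ℓ}
      ⊆ ⋃ p ∈ Finset.univ.filter Q, Cyl p := by
    intro ω hω
    have hsub : (List.ofFn fun i : Fin ℓ => Y i ω) <+ (List.ofFn fun i : Fin k => Z i ω) := by
      apply sublist_of_lcs
      rw [List.length_ofFn]
      exact hω
    exact Set.mem_biUnion
      (Finset.mem_coe.mpr (Finset.mem_filter.mpr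
        ⟨Finset.mem_univ ((fun i => Y i ω, fun j => Z j ω) : (Fin ℓ → Fin m) × (Fin k → Fin m)), hsub⟩))
      ⟨fun i => rfl, fun j => rfl⟩
  have hstep1 : μ {ω | lcsLength (List.ofFn fun i : Fin k => Z i ω) (List.ofFn fun i : Fin ℓ => Y i ω) = ℓ}
      ≤ ((Finset.univ.filter Q).card : ℝ≥0∞) * ((m : ℝ≥0∞))⁻¹ ^ (ℓ + k) := by
    calc μ _ ≤ μ (⋃ p ∈ Finset.univ.filter Q, Cyl p) := measure_mono hincl
      _ ≤ ∑ p ∈ Finset.univ.filter Q, μ (Cyl p) := measure_biUnion_finset_le _ _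
      _ = ∑ _p ∈ Finset.univ.filter Q, ((m : ℝ≥0∞))⁻¹ ^ (ℓ + k) := by
          apply Finset.sum_congr rfl
          intro p _
          exact cyl_meas μ m Y Z hindep hY hZ ℓ k p.1 p.2
      _ = _ := by rw [Finset.sum_const, nsmul_eq_mul]
  have hmne : (m : ℝ≥0∞) ≠ 0 := by
    simp
    omega
  have hfin : ((Finset.univ.filter Q).card : ℝ≥0∞) * ((m : ℝ≥0∞))⁻¹ ^ (ℓ + k) ≠ ⊤ := by
    apply ENNReal.mul_ne_top (ENNReal.natCast_ne_top _)
    exact ENNReal.pow_ne_top (ENNReal.inv_ne_top.mpr hmne)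
  have hreal : (μ {ω | lcsLength (List.ofFn fun i : Fin k => Z i ω) (List.ofFn fun i : Fin ℓ => Y i ω) = ℓ}).toReal
      ≤ ((Finset.univ.filter Q).card : ℝ) * ((m:ℝ))⁻¹ ^ (ℓ + k) := by
    have h := ENNReal.toReal_mono hfin hstep1
    rwa [ENNReal.toReal_mul, ENNReal.toReal_pow, ENNReal.toReal_inv, ENNReal.toReal_natCast,
      ENNReal.toReal_natCast] at h
  have hcount : ((Finset.univ.filter Q).card : ℝ) * t ^ ℓ ≤ (m:ℝ)^ℓ * (t + (m:ℝ) - 1)^k := by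
    have hcard_eq : (Finset.univ.filter Q).card
        = ∑ y : Fin ℓ → Fin m,
            (Finset.univ.filter fun z : Fin k → Fin m => List.ofFn y <+ List.ofFn z).card := by
      rw [Finset.card_filter, Fintype.sum_prod_type]
      apply Finset.sum_congr rfl
      intro y _
      rw [Finset.card_filter]
    rw [hcard_eq]
    push_cast
    rw [Finset.sum_mul]
    calc ∑ y : Fin ℓ → Fin m,
          ((Finset.univ.filter fun z : Fin k → Fin m => List.ofFn y <+ List.ofFn z).card : ℝ) * t ^ ℓ
        ≤ ∑ _y : Fin ℓ → Fin m, (t + (m:ℝ) - 1)^k := by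
          apply Finset.sum_le_sum
          intro y _
          have hcb := count_bound hm ht1 k (List.ofFn y)
          rwa [List.length_ofFn] at hcb
      _ = (m:ℝ)^ℓ * (t + (m:ℝ) - 1)^k := by
          rw [Finset.sum_const, Finset.card_univ, Fintype.card_fun, Fintype.card_fin,
            Fintype.card_fin, nsmul_eq_mul]
          push_cast
          ring
  have h4 : ((Finset.univ.filter Q).card : ℝ) * ((m:ℝ))⁻¹ ^ (ℓ + k) ≤ A ^ k / t ^ ℓ := by
    have htl : (0:ℝ) < t ^ ℓ := pow_pos ht0 _
    have hcle : ((Finset.univ.filter Q).card : ℝ) ≤ (m:ℝ)^ℓ * (t + (m:ℝ) - 1)^k / t^ℓ := by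
      rw [le_div_iff₀ htl]
      exact hcount
    calc ((Finset.univ.filter Q).card : ℝ) * ((m:ℝ))⁻¹ ^ (ℓ + k)
        ≤ ((m:ℝ)^ℓ * (t + (m:ℝ) - 1)^k / t^ℓ) * ((m:ℝ)⁻¹) ^ (ℓ + k) := by
          apply mul_le_mul_of_nonneg_right hcle (by positivity)
      _ = A ^ k / t ^ ℓ := by
          rw [hAeq, div_pow, inv_pow, pow_add]
          field_simp
          rw [← mul_pow]
          congr 1
          field_simp
  have h5 : A ^ k / t ^ ℓ ≤ Real.exp (-((m : ℝ) / (2 * ((m : ℝ) - 1))) * δ ^ 2 * ℓ) := by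
    have hklr : (k:ℝ) ≤ (m:ℝ) * ℓ * (1-δ) := Nat.floor_le (by positivity)
    have hAk : A ^ k ≤ Real.exp ((m:ℝ) * ℓ * (1-δ) * Real.log A) := by
      calc A ^ k = A ^ ((k:ℕ):ℝ) := (Real.rpow_natCast A k).symm
        _ ≤ A ^ ((m:ℝ) * ℓ * (1-δ)) := Real.rpow_le_rpow_of_exponent_le hA1 hklr
        _ = Real.exp ((m:ℝ) * ℓ * (1-δ) * Real.log A) := by
            rw [Real.rpow_def_of_pos hA0]
            ring_nf
    have htle : t ^ ℓ = Real.exp ((ℓ:ℝ) * Real.log t) := by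
      rw [Real.exp_nat_mul, Real.exp_log ht0]
    rw [htle, div_le_iff₀ (Real.exp_pos _), ← Real.exp_add]
    refine hAk.trans (Real.exp_le_exp.mpr ?_)
    have hkey := key_ineq (m:ℝ) hmR δ hδ0 hδ1
    have hl0 : (0:ℝ) ≤ (ℓ:ℝ) := Nat.cast_nonneg _
    have hmul := mul_le_mul_of_nonneg_left hkey hl0
    nlinarith [hmul]
  exact hreal.trans (h4.trans h5)
end

section
/- Let m ≥ 2 be an integer and let 0 < δ < (m−1)/m. Set w = ( (m(1−δ)−1)·(1 + δ/(m(1−δ)−1))^{m(1−δ)} ) / (m−1). Then ln w < −(m/(2(m−1)))·δ². -/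
open Real

/-- For `y > 1`, `2 - 4/(y+1) < log y`  (i.e. `2(y-1)/(y+1) < log y`). -/
lemma artanh_aux {y : ℝ} (hy : 1 < y) : 2 - 4 * (y + 1)⁻¹ < Real.log y := by
  set g : ℝ → ℝ := fun x => Real.log x + 4 * (x + 1)⁻¹ - 2 with hg
  have key : StrictMonoOn g (Set.Ici 1) := by
    apply strictMonoOn_of_deriv_pos (convex_Ici 1)
    · apply ContinuousOn.sub _ continuousOn_const
      apply ContinuousOn.add
      · exact Real.continuousOn_log.mono (by intro x hx; simp at hx ⊢; linarith)
      · apply ContinuousOn.mul continuousOn_const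
        apply ContinuousOn.inv₀ (by fun_prop)
        intro x hx; simp at hx; positivity
    · intro x hx
      rw [interior_Ici] at hx
      simp only [Set.mem_Ioi] at hx
      have hx0 : 0 < x := by linarith
      have hx1 : x + 1 ≠ 0 := by positivity
      have hinv : HasDerivAt (fun x : ℝ => (x + 1)⁻¹) (-1 / (x + 1) ^ 2) x := by
        simpa using ((hasDerivAt_id x).add_const 1).fun_inv hx1
      have hd : HasDerivAt g (x⁻¹ + 4 * (-1 / (x + 1) ^ 2)) x :=
        ((Real.hasDerivAt_log hx0.ne').add (hinv.const_mul 4)).sub_const 2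
      rw [hd.deriv]
      have h2 : x⁻¹ + 4 * (-1 / (x + 1) ^ 2) = (x - 1)^2 / (x * (x+1)^2) := by
        field_simp; ring
      rw [h2]
      exact div_pos (by nlinarith) (by positivity)
  have h0 : g 1 = 0 := by norm_num [hg]
  have := key (Set.self_mem_Ici) (Set.mem_Ici.mpr hy.le) hy
  rw [h0] at this
  simp only [hg] at this
  linarith

lemma log_one_sub_lt {δ : ℝ} (h0 : 0 < δ) (h1 : δ < 1) :
    Real.log (1 - δ) < -(δ + δ ^ 2 / 2) := by
  have h1δ : 0 < 1 - δ := by linarith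
  have h2δ : (0:ℝ) < 2 - δ := by linarith
  set y : ℝ := (1 - δ)⁻¹ with hy
  have hy1 : 1 < y := (one_lt_inv₀ h1δ).mpr (by linarith)
  have hB := artanh_aux hy1
  have hlog : Real.log y = -Real.log (1 - δ) := Real.log_inv (1 - δ)
  have hval : 2 - 4 * (y + 1)⁻¹ = 2 * δ / (2 - δ) := by
    rw [hy, eq_div_iff h2δ.ne']; field_simp; ring
  have hcmp : δ + δ ^ 2 / 2 ≤ 2 * δ / (2 - δ) := by
    rw [le_div_iff₀ h2δ]; nlinarith
  rw [hval, hlog] at hB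
  linarith

/-- For `y > 1`, `log y < (y - y⁻¹)/2`. -/
lemma log_lt_sinh {y : ℝ} (hy : 1 < y) : Real.log y < (y - y⁻¹) / 2 := by
  have h0 : 0 < y := by linarith
  have := Real.self_lt_sinh_iff.mpr (Real.log_pos hy)
  rwa [Real.sinh_log h0] at this



/-- Let `m ≥ 2` be an integer, `0 < δ < (m−1)/m`, and
`w = ( (m(1−δ)−1) (1 + δ/(m(1−δ)−1))^{m(1−δ)} ) / (m−1)`.  Then
`ln w < −(m/(2(m−1))) δ²`. -/
theorem stmt_9 (m : ℕ) (hm : 2 ≤ m) (δ : ℝ) (hδ0 : 0 < δ)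
    (hδ1 : δ < ((m : ℝ) - 1) / m) :
    Real.log (((m : ℝ) * (1 - δ) - 1) *
        (1 + δ / ((m : ℝ) * (1 - δ) - 1)) ^ ((m : ℝ) * (1 - δ)) / ((m : ℝ) - 1)) <
      -((m : ℝ) / (2 * ((m : ℝ) - 1))) * δ ^ 2 := by
  have hm2 : (2:ℝ) ≤ (m:ℝ) := by exact_mod_cast hm
  have hm0 : (0:ℝ) < (m:ℝ) := by linarith
  set M : ℝ := (m:ℝ) - 1 with hM
  have hM1 : 1 ≤ M := by rw [hM]; linarith
  have hM0 : 0 < M := by linarith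
  have hmδ : (m:ℝ) * δ < M := by
    have := (lt_div_iff₀ hm0).mp hδ1; linarith
  have hδlt1 : δ < 1 := by nlinarith
  have h1δ : 0 < 1 - δ := by linarith
  set a : ℝ := (m:ℝ) * (1 - δ) - 1 with ha
  have ha0 : 0 < a := by rw [ha]; nlinarith
  have haδ : a + δ = M * (1 - δ) := by rw [ha, hM]; ring
  have haδ0 : 0 < a + δ := by linarith
  have hz0 : (0:ℝ) < 1 + δ / a := by positivity
  have hz1 : 1 < 1 + δ / a := by
    have : 0 < δ / a := div_pos hδ0 ha0; linarith
  have he : (m:ℝ) * (1 - δ) = a + 1 := by rw [ha]; ring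
  have hlogw : Real.log (a * (1 + δ / a) ^ ((m:ℝ) * (1 - δ)) / M)
      = a * Real.log (1 + δ / a) + Real.log (1 - δ) := by
    rw [Real.log_div (by positivity) hM0.ne', Real.log_mul ha0.ne' (by positivity),
      Real.log_rpow hz0, he]
    have hzeq : Real.log (1 + δ / a) = Real.log M + Real.log (1 - δ) - Real.log a := by
      have hz : 1 + δ / a = M * (1 - δ) / a := by
        rw [← haδ]; field_simp
      rw [hz, Real.log_div (by positivity) ha0.ne', Real.log_mul hM0.ne' h1δ.ne']
    linear_combination hzeq
  have hb1 : a * Real.log (1 + δ / a) < δ - δ ^ 2 / (2 * (M * (1 - δ))) := by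
    have h := log_lt_sinh hz1
    have h2 : a * ((1 + δ / a - (1 + δ / a)⁻¹) / 2) = δ - δ ^ 2 / (2 * (M * (1 - δ))) := by
      rw [← haδ]
      have hzz : 1 + δ / a = (a + δ) / a := by field_simp
      rw [hzz]
      field_simp
      ring
    calc a * Real.log (1 + δ / a) < a * ((1 + δ / a - (1 + δ / a)⁻¹) / 2) := by
          exact mul_lt_mul_of_pos_left h ha0
      _ = δ - δ ^ 2 / (2 * (M * (1 - δ))) := h2
  have hb2 := log_one_sub_lt hδ0 hδlt1
  have hb3 : δ ^ 2 / (2 * M) ≤ δ ^ 2 / (2 * (M * (1 - δ))) := by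
    apply div_le_div_of_nonneg_left (by positivity) (by positivity)
    nlinarith
  have hfin : -((m:ℝ) / (2 * M)) * δ ^ 2 = -(δ ^ 2) / 2 - δ ^ 2 / (2 * M) := by
    rw [hM]; field_simp [show (m:ℝ) - 1 ≠ 0 by linarith]; ring
  rw [hlogw, hfin]
  linarith
end

section
/- Let N be a Binomial(n, p) random variable with 0 < p < 1, and let I = [np − √(np(1−p)), np + √(np(1−p))]. If n ≥ 900/(p(1−p)), then Var(N | N ∈ I) ≥ p(1−p)n/1000. -/
set_option maxHeartbeats 1000000

open MeasureTheory ProbabilityTheory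

lemma binStep19 (n j : ℕ) (p : ℝ) (hj : j < n) :
    ((1 - p) * (j + 1)) * ((n.choose (j+1) : ℝ) * p ^ (j+1) * (1-p) ^ (n - (j+1)))
    = (p * ((n:ℝ) - j)) * ((n.choose j : ℝ) * p ^ j * (1-p) ^ (n - j)) := by
  have h1 : ((n.choose (j+1) : ℝ)) * (j+1) = (n.choose j : ℝ) * ((n:ℝ) - j) := by
    have h2 := congrArg (Nat.cast : ℕ → ℝ) (Nat.choose_succ_right_eq n j)
    push_cast [Nat.cast_sub hj.le] at h2
    linarith
  have h2 : (1-p) ^ (n - j) = (1-p) ^ (n - (j+1)) * (1-p) := by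
    rw [← pow_succ]; congr 1; omega
  rw [h2]
  linear_combination ((1-p) * p^(j+1) * (1-p)^(n-(j+1))) * h1

/-- Let `N` be a `Binomial(n, p)` random variable with
`0 < p < 1`, and `I = [np − √(np(1−p)), np + √(np(1−p))]`.  If
`n ≥ 900/(p(1−p))`, then `Var(N | N ∈ I) ≥ p(1−p)n/1000`, where the conditional
variance is the variance of `N` under the conditional measure given `{N ∈ I}`. -/
theorem stmt_19 {Ω : Type*} [MeasurableSpace Ω] (μ : Measure Ω) [IsProbabilityMeasure μ]
    (n : ℕ) (p : ℝ) (hp0 : 0 < p) (hp1 : p < 1)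
    (N : Ω → ℕ) (hNmeas : Measurable N)
    (hN : ∀ k : ℕ, μ {ω | N ω = k} =
      ENNReal.ofReal ((n.choose k : ℝ) * p ^ k * (1 - p) ^ (n - k)))
    (hn : 900 / (p * (1 - p)) ≤ (n : ℝ)) :
    p * (1 - p) * n / 1000 ≤
      variance (fun ω => (N ω : ℝ))
        (ProbabilityTheory.cond μ
          {ω | (N ω : ℝ) ∈ Set.Icc (n * p - Real.sqrt (n * p * (1 - p)))
            (n * p + Real.sqrt (n * p * (1 - p)))}) := by
  have hq0 : 0 < 1 - p := by linarith
  have hpq : 0 < p * (1 - p) := mul_pos hp0 hq0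
  set s : ℝ := (n : ℝ) * p * (1 - p) with hs_def
  set σ : ℝ := Real.sqrt s with hσ_def
  set A : Set Ω := {ω | (N ω : ℝ) ∈ Set.Icc ((n : ℝ) * p - σ) ((n : ℝ) * p + σ)} with hA_def
  -- basic numeric facts
  have hs900 : 900 ≤ s := by
    rw [div_le_iff₀ hpq] at hn; nlinarith
  have hs0 : 0 ≤ s := by linarith
  have hσ2 : σ ^ 2 = s := Real.sq_sqrt hs0
  have hσ0 : 0 ≤ σ := Real.sqrt_nonneg s
  have hσ30 : 30 ≤ σ := by nlinarith
  have hσs : 30 * σ ≤ s := by nlinarith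
  have hnp : s < (n : ℝ) * p := by nlinarith [mul_pos (show (0:ℝ) < (n:ℝ)*p by nlinarith) hq0]
  have hnq : s < (n : ℝ) - (n : ℝ) * p := by nlinarith
  have hlo_pos : 0 < (n : ℝ) * p - σ := by nlinarith
  have hhi_lt : (n : ℝ) * p + σ < n := by nlinarith
  have hhi_pos : 0 ≤ (n : ℝ) * p + σ := by nlinarith
  -- key naturals
  set a : ℕ := ⌈(n : ℝ) * p - σ⌉₊ with ha_def
  set hb : ℕ := ⌊(n : ℝ) * p + σ⌋₊ with hb_def
  set k0 : ℕ := ⌈(n : ℝ) * p - (1 - p)⌉₊ with hk0_def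
  set L : ℕ := ⌊σ / 3⌋₊ with hL_def
  set M : ℕ := ⌊σ⌋₊ + 1 with hM_def
  have ha_lb : (n : ℝ) * p - σ ≤ a := Nat.le_ceil _
  have ha_ub : (a : ℝ) < (n : ℝ) * p - σ + 1 := Nat.ceil_lt_add_one hlo_pos.le
  have hb_ub : (hb : ℝ) ≤ (n : ℝ) * p + σ := Nat.floor_le hhi_pos
  have hb_lb : (n : ℝ) * p + σ - 1 < hb := by
    have := Nat.lt_floor_add_one ((n : ℝ) * p + σ); linarith
  have hb_lt_n : hb < n := by
    have : (hb : ℝ) < (n : ℝ) := lt_of_le_of_lt hb_ub hhi_lt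
    exact_mod_cast this
  have hk0_lb : (n : ℝ) * p - (1 - p) ≤ k0 := Nat.le_ceil _
  have hk0_ub : (k0 : ℝ) < (n : ℝ) * p - (1 - p) + 1 :=
    Nat.ceil_lt_add_one (by nlinarith)
  have ha_k0 : a ≤ k0 := by
    have : (a : ℝ) ≤ (k0 : ℝ) := by linarith
    exact_mod_cast this
  have hk0_hb : k0 ≤ hb := by
    have : (k0 : ℝ) ≤ (hb : ℝ) := by linarith
    exact_mod_cast this
  have hL_ub : (L : ℝ) ≤ σ / 3 := Nat.floor_le (by positivity)
  have hL_lb : σ / 3 - 1 < L := by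
    have := Nat.lt_floor_add_one (σ / 3); linarith
  have hL10 : 10 ≤ L := by
    have : (10 : ℝ) ≤ σ / 3 - 1 + 1 := by linarith
    have h2 : (10 : ℝ) < (L : ℝ) + 1 := by linarith
    have : (10 : ℕ) < L + 1 := by exact_mod_cast h2
    omega
  have hM_ub : (M : ℝ) ≤ σ + 1 := by
    have := Nat.floor_le hσ0
    push_cast [hM_def]; linarith
  -- the pmf
  set b : ℕ → ℝ := fun k => (n.choose k : ℝ) * p ^ k * (1 - p) ^ (n - k) with hb_fun
  have hb_nonneg : ∀ k, 0 ≤ b k := by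
    intro k
    show 0 ≤ (n.choose k : ℝ) * p ^ k * (1 - p) ^ (n - k)
    positivity
  have hb_pos : ∀ k, k ≤ n → 0 < b k := by
    intro k hk
    show 0 < (n.choose k : ℝ) * p ^ k * (1 - p) ^ (n - k)
    have : 0 < n.choose k := Nat.choose_pos hk
    positivity
  set ρ : ℝ := (s - σ) / (s + σ + 1) with hρ_def
  have hρ0 : 0 < ρ := by
    apply div_pos <;> nlinarith
  have hρ1 : ρ < 1 := by
    rw [div_lt_one (by nlinarith)]; nlinarith
  have hρmul : ρ * (s + σ + 1) = s - σ := by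
    rw [hρ_def, div_mul_cancel₀ _ (ne_of_gt (by linarith))]
  -- step facts
  have hstep : ∀ j : ℕ, j < n →
      ((1 - p) * (j + 1)) * b (j + 1) = (p * ((n : ℝ) - j)) * b j := fun j hj =>
    binStep19 n j p hj
  -- right side: going up from k0
  have hright : ∀ d : ℕ, k0 + d ≤ hb → ρ ^ d * b k0 ≤ b (k0 + d) ∧ b (k0 + d) ≤ b k0 := by
    intro d
    induction d with
    | zero => intro _; simp
    | succ d ih =>
      intro hle
      have hle' : k0 + d ≤ hb := by omega
      obtain ⟨ih1, ih2⟩ := ih hle'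
      set j : ℕ := k0 + d with hj_def
      have hjn : j < n := by omega
      have hjlb : (n : ℝ) * p - (1 - p) ≤ (j : ℝ) := by
        have : (k0 : ℝ) ≤ j := by exact_mod_cast Nat.le_add_right k0 d
        linarith
      have hjub : (j : ℝ) ≤ (n : ℝ) * p + σ - 1 := by
        have h1 : (j : ℝ) + 1 ≤ (hb : ℝ) := by exact_mod_cast hle
        linarith
      have hstepj := hstep j hjn
      have hden : 0 < (1 - p) * ((j : ℝ) + 1) := by positivity
      set t : ℝ := (j : ℝ) - (n : ℝ) * p with ht_def
      have e1 : p * ((n : ℝ) - j) = s - p * t := by rw [hs_def, ht_def]; ring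
      have e2 : (1 - p) * ((j : ℝ) + 1) = s + (1 - p) * (t + 1) := by
        rw [hs_def, ht_def]; ring
      have htlb : -(1 - p) ≤ t := by rw [ht_def]; linarith
      have htub : t ≤ σ - 1 := by rw [ht_def]; linarith
      have e3 : ρ * (s + σ) = s - σ - ρ := by rw [← hρmul]; ring
      have hpt : p * t ≤ σ - 1 := by
        rcases le_or_gt 0 t with ht0 | ht0
        · have h9 : 0 ≤ (1 - p) * t := mul_nonneg hq0.le ht0
          linarith only [h9, htub]
        · have h9 : p * t ≤ 0 := le_of_lt (mul_neg_of_pos_of_neg hp0 ht0)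
          linarith only [h9, hσ30]
      have hkey1 : ρ * ((1 - p) * ((j : ℝ) + 1)) ≤ p * ((n : ℝ) - j) := by
        rw [e1, e2]
        have htq : (1 - p) * (t + 1) ≤ σ := by
          have h9 : 0 ≤ p * (t + 1) := mul_nonneg hp0.le (by linarith only [htlb, hp0.le])
          linarith only [h9, htub, hσ30]
        have e4 : ρ * (s + (1 - p) * (t + 1)) ≤ ρ * (s + σ) :=
          mul_le_mul_of_nonneg_left (by linarith only [htq]) hρ0.le
        linarith only [e3, e4, hpt, hρ0.le]
      have hkey2 : p * ((n : ℝ) - j) ≤ (1 - p) * ((j : ℝ) + 1) := by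
        rw [e1, e2]
        linarith only [htlb]
      constructor
      · show ρ ^ (d + 1) * b k0 ≤ b (j + 1)
        have h1 : ρ * b j ≤ b (j + 1) := by
          have h2 : (ρ * b j) * ((1 - p) * ((j : ℝ) + 1)) ≤ b (j+1) * ((1 - p) * ((j : ℝ) + 1)) := by
            rw [mul_comm (b (j+1)) _, hstepj]
            linarith only [mul_le_mul_of_nonneg_right hkey1 (hb_nonneg j)]
          exact le_of_mul_le_mul_right h2 hden
        calc ρ ^ (d + 1) * b k0 = ρ * (ρ ^ d * b k0) := by ring
          _ ≤ ρ * b j := mul_le_mul_of_nonneg_left ih1 hρ0.le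
          _ ≤ b (j + 1) := h1
      · show b (j + 1) ≤ b k0
        have h1 : b (j + 1) ≤ b j := by
          have h2 : b (j+1) * ((1 - p) * ((j : ℝ) + 1)) ≤ b j * ((1 - p) * ((j : ℝ) + 1)) := by
            rw [mul_comm (b (j+1)) _, hstepj]
            linarith only [mul_le_mul_of_nonneg_right hkey2 (hb_nonneg j)]
          exact le_of_mul_le_mul_right h2 hden
        linarith only [h1, ih2]
  -- left side: going down from k0
  have hleft : ∀ d : ℕ, ∀ j : ℕ, a ≤ j → j + d = k0 → ρ ^ d * b k0 ≤ b j ∧ b j ≤ b k0 := by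
    intro d
    induction d with
    | zero => intro j _ hj; simp [← hj]
    | succ d ih =>
      intro j haj hjd
      have hj1 : j + 1 + d = k0 := by omega
      obtain ⟨ih1, ih2⟩ := ih (j + 1) (by omega) hj1
      have hjn : j < n := by omega
      have hjlb : (n : ℝ) * p - σ ≤ (j : ℝ) := by
        have : (a : ℝ) ≤ (j : ℝ) := by exact_mod_cast haj
        linarith
      have hjub : (j : ℝ) ≤ (n : ℝ) * p - (1 - p) := by
        have h1 : (j : ℝ) + 1 ≤ (k0 : ℝ) := by exact_mod_cast (by omega : j + 1 ≤ k0)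
        linarith
      have hstepj := hstep j hjn
      set t : ℝ := (j : ℝ) - (n : ℝ) * p with ht_def
      have e1 : p * ((n : ℝ) - j) = s - p * t := by rw [hs_def, ht_def]; ring
      have e2 : (1 - p) * ((j : ℝ) + 1) = s + (1 - p) * (t + 1) := by
        rw [hs_def, ht_def]; ring
      have htlb : -σ ≤ t := by rw [ht_def]; linarith
      have htub : t ≤ -(1 - p) := by rw [ht_def]; linarith
      have e3 : ρ * (s + σ) = s - σ - ρ := by rw [← hρmul]; ring
      have hnum : 0 < p * ((n : ℝ) - j) := by
        rw [e1]
        have h9 := mul_le_mul_of_nonneg_left htub hp0.le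
        have h10 : 0 ≤ p * (1 - p) := mul_nonneg hp0.le hq0.le
        linarith only [h9, h10, hs900]
      have hkey1 : ρ * (p * ((n : ℝ) - j)) ≤ (1 - p) * ((j : ℝ) + 1) := by
        rw [e1, e2]
        have h5 : s - p * t ≤ s + σ := by
          have h9 := mul_le_mul_of_nonneg_left htlb hp0.le
          have h10 := mul_nonneg hq0.le hσ0
          linarith only [h9, h10]
        have h6 : ρ * (s - p * t) ≤ ρ * (s + σ) :=
          mul_le_mul_of_nonneg_left h5 hρ0.le
        have h7 : 1 - σ ≤ (1 - p) * (t + 1) := by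
          have h8 := mul_le_mul_of_nonneg_left (show (1:ℝ) - σ ≤ t + 1 by linarith) hq0.le
          have h9 := mul_nonneg hp0.le (show (0:ℝ) ≤ σ - 1 by linarith)
          linarith only [h8, h9]
        linarith only [h6, h7, e3, hρ0.le]
      have hkey2 : (1 - p) * ((j : ℝ) + 1) ≤ p * ((n : ℝ) - j) := by
        rw [e1, e2]
        linarith only [htub]
      constructor
      · have h1 : ρ * b (j + 1) ≤ b j := by
          have h2 : (ρ * b (j + 1)) * (p * ((n : ℝ) - j)) ≤ b j * (p * ((n : ℝ) - j)) := by
            rw [mul_comm (b j) _, ← hstepj]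
            linarith only [mul_le_mul_of_nonneg_right hkey1 (hb_nonneg (j+1))]
          exact le_of_mul_le_mul_right h2 hnum
        calc ρ ^ (d + 1) * b k0 = ρ * (ρ ^ d * b k0) := by ring
          _ ≤ ρ * b (j + 1) := mul_le_mul_of_nonneg_left ih1 hρ0.le
          _ ≤ b j := h1
      · have h1 : b j ≤ b (j + 1) := by
          have h2 : b j * (p * ((n : ℝ) - j)) ≤ b (j + 1) * (p * ((n : ℝ) - j)) := by
            rw [mul_comm (b j) _, ← hstepj]
            linarith only [mul_le_mul_of_nonneg_right hkey2 (hb_nonneg (j+1))]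
          exact le_of_mul_le_mul_right h2 hnum
        linarith only [h1, ih2]
  -- comparison on S
  have hcomp : ∀ k ∈ Finset.Icc a hb, ρ ^ M * b k0 ≤ b k ∧ b k ≤ b k0 := by
    intro k hk
    rw [Finset.mem_Icc] at hk
    have hρM_mono : ∀ d : ℕ, d ≤ M → ρ ^ M ≤ ρ ^ d := fun d hd =>
      pow_le_pow_of_le_one hρ0.le hρ1.le hd
    rcases le_total k k0 with hkk | hkk
    · have hd : k + (k0 - k) = k0 := by omega
      obtain ⟨h1, h2⟩ := hleft (k0 - k) k hk.1 hd
      have hdM : k0 - k ≤ M := by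
        have hc : ((k0 - k : ℕ) : ℝ) ≤ σ + 1 := by
          push_cast [Nat.cast_sub hkk]
          have : (n : ℝ) * p - σ ≤ (k : ℝ) := by
            have : (a : ℝ) ≤ (k : ℝ) := by exact_mod_cast hk.1
            linarith
          linarith
        have : k0 - k ≤ ⌊σ + 1⌋₊ := Nat.le_floor hc
        rw [Nat.floor_add_one hσ0] at this
        omega
      exact ⟨le_trans (mul_le_mul_of_nonneg_right (hρM_mono _ hdM) (hb_nonneg k0)) h1, h2⟩
    · have hd : k0 + (k - k0) = k := by omega
      obtain ⟨h1, h2⟩ := hright (k - k0) (by omega)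
      rw [hd] at h1 h2
      have hdM : k - k0 ≤ M := by
        have hc : ((k - k0 : ℕ) : ℝ) ≤ σ + 1 := by
          push_cast [Nat.cast_sub hkk]
          have : (k : ℝ) ≤ (hb : ℝ) := by exact_mod_cast hk.2
          linarith
        have : k - k0 ≤ ⌊σ + 1⌋₊ := Nat.le_floor hc
        rw [Nat.floor_add_one hσ0] at this
        omega
      exact ⟨le_trans (mul_le_mul_of_nonneg_right (hρM_mono _ hdM) (hb_nonneg k0)) h1, h2⟩
  have hb0_pos : 0 < b k0 := hb_pos k0 (by omega)
  -- lower bound on ρ ^ M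
  have hsσ : 0 < s - σ := by linarith
  have hρM_exp : Real.exp (-2.2) ≤ ρ ^ M := by
    set x : ℝ := (2 * σ + 1) / (s - σ) with hx_def
    have hx0 : 0 ≤ x := by positivity
    have hxρ : ρ * (1 + x) = 1 := by
      rw [hρ_def, hx_def]
      field_simp
      ring
    have h1 : (1 + x) ^ M ≤ Real.exp (x * M) := by
      calc (1 + x) ^ M ≤ Real.exp x ^ M := by
            apply pow_le_pow_left₀ (by linarith) _ M
            linarith [Real.add_one_le_exp x]
        _ = Real.exp (x * M) := by
            rw [← Real.exp_nat_mul]; ring_nf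
    have h2 : x * M ≤ 2.2 := by
      rw [hx_def, div_mul_eq_mul_div, div_le_iff₀ hsσ]
      have hM0 : (0 : ℝ) ≤ (M : ℝ) := Nat.cast_nonneg M
      have h3 : (2 * σ + 1) * (M : ℝ) ≤ (2 * σ + 1) * (σ + 1) :=
        mul_le_mul_of_nonneg_left hM_ub (by linarith)
      nlinarith [hσ30, hσ2]
    have h3 : ρ ^ M * (1 + x) ^ M = 1 := by rw [← mul_pow, hxρ, one_pow]
    have h4 : 0 < (1 + x) ^ M := by positivity
    have h5 : ρ ^ M = ((1 + x) ^ M)⁻¹ := by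
      field_simp at h3 ⊢
      linarith [h3]
    rw [h5]
    calc Real.exp (-2.2) ≤ Real.exp (-(x * M)) := Real.exp_le_exp.mpr (by linarith)
      _ = (Real.exp (x * M))⁻¹ := by rw [Real.exp_neg]
      _ ≤ ((1 + x) ^ M)⁻¹ := by
          apply inv_anti₀ h4 h1
  have hρM_lb : (11 : ℝ) / 100 ≤ ρ ^ M := by
    have e5 : Real.exp (2.2) ^ (5 : ℕ) = Real.exp 11 := by
      rw [← Real.exp_nat_mul]; norm_num
    have e11 : Real.exp (11 : ℝ) = Real.exp 1 ^ (11 : ℕ) := by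
      rw [← Real.exp_nat_mul]; norm_num
    have h6 : Real.exp 1 ^ (11 : ℕ) < 2.7182818286 ^ (11 : ℕ) :=
      pow_lt_pow_left₀ Real.exp_one_lt_d9 (Real.exp_pos 1).le (by norm_num)
    have h7 : (2.7182818286 : ℝ) ^ (11 : ℕ) < (100 / 11) ^ (5 : ℕ) := by norm_num
    have h8 : Real.exp (2.2) < 100 / 11 := by
      apply lt_of_pow_lt_pow_left₀ 5 (by norm_num)
      rw [e5, e11]
      linarith
    have h9 : (11 : ℝ) / 100 ≤ Real.exp (-2.2) := by
      rw [Real.exp_neg]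
      have h10 := inv_anti₀ (Real.exp_pos 2.2) h8.le
      calc (11 : ℝ) / 100 = (100 / 11 : ℝ)⁻¹ := by norm_num
        _ ≤ (Real.exp 2.2)⁻¹ := h10
    exact le_trans h9 hρM_exp
  -- measure-theoretic setup
  have hmemA : ∀ ω, ω ∈ A ↔ N ω ∈ Finset.Icc a hb := by
    intro ω
    simp only [hA_def, Set.mem_setOf_eq, Set.mem_Icc, Finset.mem_Icc]
    constructor
    · rintro ⟨h1, h2⟩
      exact ⟨Nat.ceil_le.mpr h1, Nat.le_floor h2⟩
    · rintro ⟨h1, h2⟩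
      constructor
      · calc (n : ℝ) * p - σ ≤ (a : ℝ) := ha_lb
          _ ≤ (N ω : ℝ) := by exact_mod_cast h1
      · calc (N ω : ℝ) ≤ (hb : ℝ) := by exact_mod_cast h2
          _ ≤ (n : ℝ) * p + σ := hb_ub
  have hμT : ∀ T : Finset ℕ, μ {ω | N ω ∈ T} = ENNReal.ofReal (∑ k ∈ T, b k) := by
    intro T
    have hset : {ω | N ω ∈ T} = ⋃ k ∈ T, {ω | N ω = k} := by
      ext ω; simp
    rw [hset, measure_biUnion_finset]
    · rw [ENNReal.ofReal_sum_of_nonneg (fun k _ => hb_nonneg k)]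
      exact Finset.sum_congr rfl fun k _ => hN k
    · intro i _ j _ hij
      simp only [Function.onFun, Set.disjoint_left]
      intro ω h1 h2
      exact hij (by simp only [Set.mem_setOf_eq] at h1 h2; rw [← h1, ← h2])
    · intro k _
      exact hNmeas (measurableSet_singleton k)
  have hA_meas : MeasurableSet A := by
    have : A = N ⁻¹' {k | k ∈ Finset.Icc a hb} := by
      ext ω; exact hmemA ω
    rw [this]
    exact hNmeas (MeasurableSet.of_discrete)
  set X : Ω → ℝ := fun ω => (N ω : ℝ) with hX_def
  set ν : Measure Ω := ProbabilityTheory.cond μ A with hν_def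
  have hX_meas : Measurable X := measurable_from_top.comp hNmeas
  have hμA : μ A = ENNReal.ofReal (∑ k ∈ Finset.Icc a hb, b k) := by
    rw [show A = {ω | N ω ∈ Finset.Icc a hb} from Set.ext hmemA]
    exact hμT _
  set wa : ℝ := ∑ k ∈ Finset.Icc a hb, b k with hwa_def
  have hk0S : k0 ∈ Finset.Icc a hb := Finset.mem_Icc.mpr ⟨ha_k0, hk0_hb⟩
  have hwa_lb : b k0 ≤ wa := Finset.single_le_sum (fun k _ => hb_nonneg k) hk0S
  have hwa_pos : 0 < wa := lt_of_lt_of_le hb0_pos hwa_lb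
  have hwa_ub : wa ≤ (2 * σ + 1) * b k0 := by
    calc wa ≤ (Finset.Icc a hb).card • b k0 :=
          Finset.sum_le_card_nsmul _ _ _ (fun k hk => (hcomp k hk).2)
      _ = ((Finset.Icc a hb).card : ℝ) * b k0 := by rw [nsmul_eq_mul]
      _ ≤ (2 * σ + 1) * b k0 := by
          apply mul_le_mul_of_nonneg_right _ (hb_nonneg k0)
          rw [Nat.card_Icc]
          have hcast : ((hb + 1 - a : ℕ) : ℝ) = (hb : ℝ) + 1 - a := by
            push_cast [Nat.cast_sub (by omega : a ≤ hb + 1)]; ring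
          rw [hcast]; linarith
  have hμA_ne : μ A ≠ 0 := by
    rw [hμA]
    simp only [ne_eq, ENNReal.ofReal_eq_zero, not_le]
    exact hwa_pos
  haveI hνP : IsProbabilityMeasure ν := cond_isProbabilityMeasure hμA_ne
  have hνae : ∀ᵐ ω ∂ν, ω ∈ A := by
    have h0 : ν Aᶜ = 0 := by
      rw [hν_def, cond_apply hA_meas, Set.inter_compl_self, measure_empty, mul_zero]
    exact mem_ae_iff.mpr h0
  have hXmem : MemLp X 2 ν := by
    apply MemLp.of_bound hX_meas.aestronglyMeasurable ((n : ℝ) * p + σ)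
    filter_upwards [hνae] with ω hω
    rw [Real.norm_eq_abs, abs_of_nonneg (by positivity)]
    exact hω.2
  set E : ℝ := ∫ x, X x ∂ν with hE_def
  have hvar : variance X ν = ∫ ω, (X ω - E) ^ 2 ∂ν := by
    rw [variance_eq_integral hX_meas.aemeasurable]
  have hInt_sq : Integrable (fun ω => (X ω - E) ^ 2) ν := by
    have h1 := (hXmem.sub (memLp_const E)).integrable_sq
    simpa using h1
  have hs_eq : p * (1 - p) * (n : ℝ) = s := by rw [hs_def]; ring
  -- the key reduction
  have key : ∀ SJ : Finset ℕ, SJ ⊆ Finset.Icc a hb → SJ.card = L →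
      (∀ k ∈ SJ, (σ - (L : ℝ)) ^ 2 ≤ ((k : ℝ) - E) ^ 2) →
      p * (1 - p) * n / 1000 ≤ variance X ν := by
    intro SJ hsub hcard hdist
    set B : Set Ω := {ω | N ω ∈ SJ} with hB_def
    have hB_meas : MeasurableSet B := hNmeas MeasurableSet.of_discrete
    have hμB : μ B = ENNReal.ofReal (∑ k ∈ SJ, b k) := hμT SJ
    set wj : ℝ := ∑ k ∈ SJ, b k with hwj_def
    have hwj_lb : (L : ℝ) * (ρ ^ M * b k0) ≤ wj := by
      calc (L : ℝ) * (ρ ^ M * b k0) = SJ.card • (ρ ^ M * b k0) := by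
            rw [hcard, nsmul_eq_mul]
        _ ≤ wj := Finset.card_nsmul_le_sum _ _ _ (fun k hk => (hcomp k (hsub hk)).1)
    have hwj_nonneg : 0 ≤ wj := Finset.sum_nonneg (fun k _ => hb_nonneg k)
    have hBA : B ⊆ A := fun ω hω => (hmemA ω).mpr (hsub hω)
    have hνB : ν B = ENNReal.ofReal (wj / wa) := by
      rw [hν_def, cond_apply hA_meas, Set.inter_eq_self_of_subset_right hBA, hμA, hμB,
        ← ENNReal.ofReal_inv_of_pos hwa_pos, ← ENNReal.ofReal_mul (by positivity)]
      rw [inv_mul_eq_div]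
    have hind : ∀ ω, Set.indicator B (fun _ => (σ - (L : ℝ)) ^ 2) ω ≤ (X ω - E) ^ 2 := by
      intro ω
      by_cases hω : ω ∈ B
      · rw [Set.indicator_of_mem hω]
        exact hdist (N ω) hω
      · rw [Set.indicator_of_notMem hω]
        positivity
    have hIind : Integrable (Set.indicator B fun _ => (σ - (L : ℝ)) ^ 2) ν :=
      (integrable_const _).indicator hB_meas
    have hlow : (σ - (L : ℝ)) ^ 2 * (wj / wa) ≤ variance X ν := by
      rw [hvar]
      calc (σ - (L : ℝ)) ^ 2 * (wj / wa)
          = (ν B).toReal • (σ - (L : ℝ)) ^ 2 := by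
            rw [hνB, ENNReal.toReal_ofReal (by positivity), smul_eq_mul]; ring
        _ = ∫ ω, Set.indicator B (fun _ => (σ - (L : ℝ)) ^ 2) ω ∂ν :=
            (integral_indicator_const _ hB_meas).symm
        _ ≤ ∫ ω, (X ω - E) ^ 2 ∂ν := integral_mono hIind hInt_sq hind
    -- numeric conclusion
    have h1 : (L : ℝ) * ((11 / 100) * b k0) ≤ wj := by
      refine le_trans ?_ hwj_lb
      apply mul_le_mul_of_nonneg_left _ (Nat.cast_nonneg L)
      exact mul_le_mul_of_nonneg_right hρM_lb (hb_nonneg k0)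
    have hγ : (L : ℝ) * (11 / 100) / (2 * σ + 1) ≤ wj / wa := by
      rw [div_le_div_iff₀ (by linarith) hwa_pos]
      calc (L : ℝ) * (11 / 100) * wa ≤ (L : ℝ) * (11 / 100) * ((2 * σ + 1) * b k0) :=
            mul_le_mul_of_nonneg_left hwa_ub (by positivity)
        _ = ((L : ℝ) * ((11 / 100) * b k0)) * (2 * σ + 1) := by ring
        _ ≤ wj * (2 * σ + 1) := mul_le_mul_of_nonneg_right h1 (by linarith)
    have hL1 : σ / 3 - 1 ≤ (L : ℝ) := hL_lb.le
    have hd2 : (2 * σ / 3) ^ 2 ≤ (σ - (L : ℝ)) ^ 2 :=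
      pow_le_pow_left₀ (by linarith) (by linarith) 2
    have hfin : s / 1000 ≤ (σ - (L : ℝ)) ^ 2 * (wj / wa) := by
      have h2 : (σ - (L : ℝ)) ^ 2 * ((L : ℝ) * (11 / 100) / (2 * σ + 1)) ≤
          (σ - (L : ℝ)) ^ 2 * (wj / wa) :=
        mul_le_mul_of_nonneg_left hγ (sq_nonneg _)
      refine le_trans ?_ h2
      have h4 : 4 * σ ^ 2 / 9 * (σ / 3 - 1) ≤ (σ - (L : ℝ)) ^ 2 * (L : ℝ) := by
        apply mul_le_mul (by linarith only [hd2]) hL1 (by linarith only [hσ30]) (sq_nonneg _)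
      have h5 : σ ^ 2 * 30 ≤ σ ^ 2 * σ := mul_le_mul_of_nonneg_left hσ30 (sq_nonneg σ)
      have h3 : s * (2 * σ + 1) ≤ (σ - (L : ℝ)) ^ 2 * ((L : ℝ) * (11 / 100)) * 1000 := by
        rw [← hσ2]
        linarith only [h4, h5, sq_nonneg σ]
      have heq : (σ - (L : ℝ)) ^ 2 * ((L : ℝ) * (11 / 100) / (2 * σ + 1)) =
          (σ - (L : ℝ)) ^ 2 * ((L : ℝ) * (11 / 100)) / (2 * σ + 1) := by ring
      rw [heq, div_le_div_iff₀ (by norm_num : (0:ℝ) < 1000)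
        (by linarith : (0:ℝ) < 2 * σ + 1)]
      linarith only [h3]
    calc p * (1 - p) * n / 1000 = s / 1000 := by rw [hs_eq]
      _ ≤ (σ - (L : ℝ)) ^ 2 * (wj / wa) := hfin
      _ ≤ variance X ν := hlow
  rcases le_total E ((n : ℝ) * p) with hE | hE
  · -- conditional mean below np : use the right end interval
    have hLhb : L ≤ hb := by
      have : (L : ℝ) ≤ (hb : ℝ) := by linarith
      exact_mod_cast this
    have hcast : ((hb - L + 1 : ℕ) : ℝ) = (hb : ℝ) - L + 1 := by
      push_cast [Nat.cast_sub hLhb]; ring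
    apply key (Finset.Icc (hb - L + 1) hb)
    · apply Finset.Icc_subset_Icc _ le_rfl
      have : (a : ℝ) ≤ ((hb - L + 1 : ℕ) : ℝ) := by rw [hcast]; linarith
      exact_mod_cast this
    · rw [Nat.card_Icc]; omega
    · intro k hk
      rw [Finset.mem_Icc] at hk
      have hk1 : ((hb - L + 1 : ℕ) : ℝ) ≤ (k : ℝ) := by exact_mod_cast hk.1
      rw [hcast] at hk1
      have hk2 : σ - (L : ℝ) ≤ (k : ℝ) - E := by linarith
      exact pow_le_pow_left₀ (by linarith) hk2 2
  · -- conditional mean above np : use the left end interval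
    have hcast : ((a + L - 1 : ℕ) : ℝ) = (a : ℝ) + L - 1 := by
      push_cast [Nat.cast_sub (by omega : 1 ≤ a + L)]; ring
    apply key (Finset.Icc a (a + L - 1))
    · apply Finset.Icc_subset_Icc le_rfl _
      have : ((a + L - 1 : ℕ) : ℝ) ≤ (hb : ℝ) := by rw [hcast]; linarith
      exact_mod_cast this
    · rw [Nat.card_Icc]; omega
    · intro k hk
      rw [Finset.mem_Icc] at hk
      have hk1 : (k : ℝ) ≤ ((a + L - 1 : ℕ) : ℝ) := by exact_mod_cast hk.2
      rw [hcast] at hk1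
      have hk2 : σ - (L : ℝ) ≤ E - (k : ℝ) := by linarith
      calc (σ - (L : ℝ)) ^ 2 ≤ (E - (k : ℝ)) ^ 2 := pow_le_pow_left₀ (by linarith) hk2 2
        _ = ((k : ℝ) - E) ^ 2 := by ring
end
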